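/- arXiv:math/0103131 — 3 statements merged into one kernel-verified Lean document; each statement's English description precedes it below -/
import Mathlib

section
/- Let a < 0 and α, β, γ > −1, and let n be a nonnegative integer. Define the polynomial P(x) = C(α+β+γ+3n, n)^{−1} Σ_{k=0}^{n} Σ_{j=0}^{n−k} C(α+n, k) C(β+n, j) C(γ+n, n−k−j) (x−a)^{n−k} x^{n−j} (x−1)^{k+j}, where C(a, i) = a(a−1)⋯(a−i+1)/i! is the generalized binomial coefficient. Then P is a monic polynomial of degree 2n and satisfies ∫_a^0 P(x)(x−a)^{α}|x|^{β}(1−x)^{γ} x^k dx = 0 for k = 0,…,n−1 and ∫_0^1 P(x)(x−a)^{α} x^{β}(1−x)^{γ} x^k dx = 0 for k = 0,…,n−1. -/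
open MeasureTheory Polynomial

/-- The generalized binomial coefficient `C(a, i) = a(a-1)⋯(a-i+1)/i!` for real `a`. -/
noncomputable def genBinom (a : ℝ) (i : ℕ) : ℝ :=
  (∏ t ∈ Finset.range i, (a - t)) / (Nat.factorial i)

namespace JA

lemma genBinom_zero (a : ℝ) : genBinom a 0 = 1 := by simp [genBinom]

lemma genBinom_succ (a : ℝ) (k : ℕ) :
    (k + 1 : ℝ) * genBinom a (k + 1) = (a - k) * genBinom a k := by
  have hk : (Nat.factorial (k+1) : ℝ) = (k+1) * Nat.factorial k := by
    push_cast [Nat.factorial_succ]; ring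
  have h1 : (Nat.factorial k : ℝ) ≠ 0 := by positivity
  have h2 : ((k:ℝ) + 1) ≠ 0 := by positivity
  rw [genBinom, genBinom, Finset.prod_range_succ, hk]
  field_simp

/-- `genBinom` of a natural number is the binomial coefficient. -/
lemma genBinom_nat (m k : ℕ) : genBinom (m : ℝ) k = m.choose k := by
  have hprod : (∏ t ∈ Finset.range k, ((m:ℝ) - t)) = (m.descFactorial k : ℝ) := by
    induction k with
    | zero => simp
    | succ k ih =>
      rw [Finset.prod_range_succ, ih, Nat.descFactorial_succ]
      by_cases h : k < m
      · push_cast [Nat.cast_sub h.le]; ring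
      · have hm : m ≤ k := by omega
        rw [Nat.sub_eq_zero_of_le hm]
        rcases eq_or_lt_of_le hm with h2 | h2
        · subst h2; simp
        · have hL : m.descFactorial k = 0 := Nat.descFactorial_eq_zero_iff_lt.2 h2
          simp [hL]
  rw [genBinom, hprod, Nat.descFactorial_eq_factorial_mul_choose]
  push_cast
  rw [mul_comm]
  field_simp



section V2
open Polynomial
noncomputable def gBpoly (k : ℕ) : Polynomial ℝ :=
  Polynomial.C ((Nat.factorial k : ℝ))⁻¹ * ∏ t ∈ Finset.range k, (Polynomial.X - Polynomial.C (t:ℝ))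

lemma gBpoly_eval (x : ℝ) (k : ℕ) : (gBpoly k).eval x = genBinom x k := by
  simp [gBpoly, genBinom, eval_prod, div_eq_inv_mul]

lemma vander_nat_nat (n m l : ℕ) :
    ∑ k ∈ Finset.range (n+1), genBinom (m:ℝ) k * genBinom (l:ℝ) (n-k)
      = genBinom ((m:ℝ) + (l:ℝ)) n := by
  have h := Nat.add_choose_eq m l n
  have h2 : ((m:ℝ) + l) = ((m + l : ℕ) : ℝ) := by push_cast; ring
  rw [h2, genBinom_nat]
  rw [h, Finset.Nat.sum_antidiagonal_eq_sum_range_succ_mk]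
  push_cast
  refine Finset.sum_congr rfl fun k _ => ?_
  rw [genBinom_nat, genBinom_nat]

lemma eq_of_nat_eval {F G : Polynomial ℝ} (h : ∀ m : ℕ, F.eval (m:ℝ) = G.eval (m:ℝ)) :
    F = G := by
  have : F - G = 0 := by
    apply Polynomial.eq_zero_of_infinite_isRoot
    apply Set.Infinite.mono (s := Set.range ((↑) : ℕ → ℝ))
    · rintro x ⟨m, rfl⟩
      simp [Polynomial.IsRoot, h m]
    · exact Set.infinite_range_of_injective Nat.cast_injective
  exact sub_eq_zero.mp this

lemma vander_real_nat (n : ℕ) (x : ℝ) (l : ℕ) :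
    ∑ k ∈ Finset.range (n+1), genBinom x k * genBinom (l:ℝ) (n-k)
      = genBinom (x + (l:ℝ)) n := by
  have key : (∑ k ∈ Finset.range (n+1), Polynomial.C (genBinom (l:ℝ) (n-k)) * gBpoly k)
      = (gBpoly n).comp (Polynomial.X + Polynomial.C (l:ℝ)) := by
    apply eq_of_nat_eval
    intro m
    simp only [Polynomial.eval_finset_sum, Polynomial.eval_mul, Polynomial.eval_C,
      Polynomial.eval_comp, Polynomial.eval_add, Polynomial.eval_X, gBpoly_eval]
    rw [← vander_nat_nat n m l]
    refine Finset.sum_congr rfl fun k _ => ?_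
    ring
  have := congrArg (Polynomial.eval x) key
  simp only [Polynomial.eval_finset_sum, Polynomial.eval_mul, Polynomial.eval_C,
    Polynomial.eval_comp, Polynomial.eval_add, Polynomial.eval_X, gBpoly_eval] at this
  rw [← this]
  refine Finset.sum_congr rfl fun k _ => ?_
  ring

lemma vander2 (n : ℕ) (x y : ℝ) :
    ∑ k ∈ Finset.range (n+1), genBinom x k * genBinom y (n-k)
      = genBinom (x + y) n := by
  have key : (∑ k ∈ Finset.range (n+1), Polynomial.C (genBinom x k) * gBpoly (n-k))
      = (gBpoly n).comp (Polynomial.C x + Polynomial.X) := by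
    apply eq_of_nat_eval
    intro m
    simp only [Polynomial.eval_finset_sum, Polynomial.eval_mul, Polynomial.eval_C,
      Polynomial.eval_comp, Polynomial.eval_add, Polynomial.eval_X, gBpoly_eval]
    exact vander_real_nat n x m
  have := congrArg (Polynomial.eval y) key
  simp only [Polynomial.eval_finset_sum, Polynomial.eval_mul, Polynomial.eval_C,
    Polynomial.eval_comp, Polynomial.eval_add, Polynomial.eval_X, gBpoly_eval] at this
  exact this

lemma vander3 (n : ℕ) (x y z : ℝ) :
    ∑ k ∈ Finset.range (n+1), ∑ j ∈ Finset.range (n-k+1),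
      genBinom x k * genBinom y j * genBinom z (n-k-j)
      = genBinom (x + y + z) n := by
  have h1 : ∀ k, ∑ j ∈ Finset.range (n-k+1), genBinom x k * genBinom y j * genBinom z (n-k-j)
      = genBinom x k * genBinom (y + z) (n-k) := by
    intro k
    rw [← vander2 (n-k) y z, Finset.mul_sum]
    refine Finset.sum_congr rfl fun j _ => ?_
    rw [Nat.sub_sub]
    ring
  simp only [h1]
  rw [add_assoc, ← vander2 n x (y+z)]

end V2

noncomputable def Spoly (a α β γ : ℝ) (n : ℕ) : Polynomial ℝ :=
  ∑ k ∈ Finset.range (n + 1), ∑ j ∈ Finset.range (n - k + 1),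
    Polynomial.C (genBinom (α + n) k * genBinom (β + n) j *
        genBinom (γ + n) (n - k - j)) *
      (Polynomial.X - Polynomial.C a) ^ (n - k) * Polynomial.X ^ (n - j) *
      (Polynomial.X - 1) ^ (k + j)

section Core
open Polynomial Finset

variable (c d σ τ p₀ q₀ r₀ : ℝ)

def tri (m : ℕ) : Finset (ℕ × ℕ) :=
  (Finset.range (m+1) ×ˢ Finset.range (m+1)).filter (fun s => s.1 + s.2 ≤ m)

lemma mem_tri {m : ℕ} {s : ℕ × ℕ} : s ∈ tri m ↔ s.1 + s.2 ≤ m := by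
  simp only [tri, Finset.mem_filter, Finset.mem_product, Finset.mem_range]
  omega

noncomputable def coefA (p₀ q₀ r₀ σ : ℝ) (i k j : ℕ) : ℝ :=
  (Nat.factorial i : ℝ) * genBinom p₀ k * ((-1)^j * genBinom q₀ j) *
    (σ^(i-k-j) * genBinom r₀ (i-k-j))

noncomputable def Lp : Polynomial ℝ := C σ * X + C τ

noncomputable def Mp (i : ℕ) (s : ℕ × ℕ) : Polynomial ℝ :=
  (X - C c)^(i - s.1) * (C d - X)^(i - s.2) * (Lp σ τ)^(s.1 + s.2)

noncomputable def Epoly (i : ℕ) : Polynomial ℝ :=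
  ∑ s ∈ tri i, C (coefA p₀ q₀ r₀ σ i s.1 s.2) * Mp c d σ τ i s

noncomputable def Dop (p q r : ℝ) (Q : Polynomial ℝ) : Polynomial ℝ :=
  C p * (C d - X) * Lp σ τ * Q - C q * (X - C c) * Lp σ τ * Q
    + C (r*σ) * (X - C c) * (C d - X) * Q
    + (X - C c) * (C d - X) * Lp σ τ * derivative Q

lemma deriv_pow_mul (w : Polynomial ℝ) (m : ℕ) :
    w * derivative (w ^ m) = C (m:ℝ) * w^m * derivative w := by
  cases m with
  | zero => simp
  | succ m =>
    rw [derivative_pow, show m + 1 - 1 = m from rfl]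
    push_cast
    ring

lemma Dop_term (i : ℕ) (A : ℝ) (s : ℕ × ℕ) (hs : s.1 + s.2 ≤ i) :
    Dop c d σ τ (p₀ - i) (q₀ - i) (r₀ - i) (C A * Mp c d σ τ i s) =
      C (A * (p₀ - s.1)) * Mp c d σ τ (i+1) (s.1+1, s.2)
      - C (A * (q₀ - s.2)) * Mp c d σ τ (i+1) (s.1, s.2+1)
      + C (A * ((r₀ - ((i - s.1 - s.2 : ℕ) : ℝ)) * σ)) * Mp c d σ τ (i+1) s := by
  obtain ⟨k, j⟩ := s
  simp only at hs ⊢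
  -- name exponents
  have e1 : i + 1 - (k+1) = i - k := by omega
  have e2 : i + 1 - k = (i - k) + 1 := by omega
  have e3 : i + 1 - j = (i - j) + 1 := by omega
  have e4 : i + 1 - (j+1) = i - j := by omega
  have c1 : ((i - k : ℕ) : ℝ) = (i:ℝ) - k := by
    have : k ≤ i := by omega
    push_cast [this]; ring
  have c2 : ((i - j : ℕ) : ℝ) = (i:ℝ) - j := by
    have : j ≤ i := by omega
    push_cast [this]; ring
  have c3 : ((i - k - j : ℕ) : ℝ) = (i:ℝ) - k - j := by
    have : k + j ≤ i := hs
    push_cast [Nat.sub_sub, this]; ring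
  have h1 := deriv_pow_mul (X - C c) (i - k)
  have h2 := deriv_pow_mul (C d - X) (i - j)
  have h3 := deriv_pow_mul (Lp σ τ) (k + j)
  rw [derivative_sub, derivative_X, derivative_C, sub_zero, mul_one] at h1
  rw [derivative_sub, derivative_X, derivative_C, zero_sub] at h2
  rw [show derivative (Lp σ τ) = C σ by simp [Lp]] at h3
  rw [c1] at h1
  rw [c2] at h2
  simp only [Nat.cast_add] at h3
  simp only [map_sub, map_mul, map_add] at h1 h2 h3 ⊢
  simp only [Dop, Mp, e1, e2, e3, e4, derivative_mul, derivative_C, zero_mul, zero_add,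
    c1, c2, c3]
  simp only [map_sub, map_mul, map_add]
  linear_combination ((C d - X)^(i-j) * (Lp σ τ)^(k+j) * ((C d - X) * Lp σ τ) * C A) * h1
    + ((X - C c)^(i-k) * (Lp σ τ)^(k+j) * ((X - C c) * Lp σ τ) * C A) * h2
    + ((X - C c)^(i-k) * (C d - X)^(i-j) * ((X - C c) * (C d - X)) * C A) * h3

lemma Dop_sum (p q r : ℝ) {ι : Type*} (t : Finset ι) (f : ι → Polynomial ℝ) :
    Dop c d σ τ p q r (∑ s ∈ t, f s) = ∑ s ∈ t, Dop c d σ τ p q r (f s) := by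
  simp only [Dop, derivative_sum, Finset.mul_sum, ← Finset.sum_sub_distrib,
    ← Finset.sum_add_distrib]

noncomputable def Bc1 (p₀ q₀ r₀ σ : ℝ) (i : ℕ) (s : ℕ × ℕ) : ℝ :=
  (s.1 : ℝ) * (Nat.factorial i : ℝ) * genBinom p₀ s.1 * ((-1)^s.2 * genBinom q₀ s.2) *
    (σ^(i+1-s.1-s.2) * genBinom r₀ (i+1-s.1-s.2))

noncomputable def Bc2 (p₀ q₀ r₀ σ : ℝ) (i : ℕ) (s : ℕ × ℕ) : ℝ :=
  (Nat.factorial i : ℝ) * genBinom p₀ s.1 * ((-1)^s.2 * (s.2:ℝ) * genBinom q₀ s.2) *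
    (σ^(i+1-s.1-s.2) * genBinom r₀ (i+1-s.1-s.2))

noncomputable def Bc3 (p₀ q₀ r₀ σ : ℝ) (i : ℕ) (s : ℕ × ℕ) : ℝ :=
  (Nat.factorial i : ℝ) * genBinom p₀ s.1 * ((-1)^s.2 * genBinom q₀ s.2) *
    (σ^(i+1-s.1-s.2) * (((i+1-s.1-s.2 : ℕ)) : ℝ) * genBinom r₀ (i+1-s.1-s.2))

lemma sumA (i : ℕ) :
    ∑ s ∈ tri i, C (coefA p₀ q₀ r₀ σ i s.1 s.2 * (p₀ - s.1)) * Mp c d σ τ (i+1) (s.1+1, s.2)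
      = ∑ s ∈ tri (i+1), C (Bc1 p₀ q₀ r₀ σ i s) * Mp c d σ τ (i+1) s := by
  rw [← Finset.sum_filter_of_ne (p := fun s : ℕ × ℕ => s.1 ≠ 0)
    (f := fun s => C (Bc1 p₀ q₀ r₀ σ i s) * Mp c d σ τ (i+1) s)
    (fun x _ hx h0 => hx (by simp [Bc1, h0]))]
  refine Finset.sum_nbij' (fun s => (s.1+1, s.2)) (fun s => (s.1-1, s.2))
    ?_ ?_ ?_ ?_ ?_
  · intro s hs
    rw [mem_tri] at hs
    simp only [Finset.mem_filter, mem_tri]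
    omega
  · intro s hs
    simp only [Finset.mem_filter, mem_tri] at hs
    rw [mem_tri]
    omega
  · intro s _; simp
  · intro s hs
    simp only [Finset.mem_filter, mem_tri] at hs
    ext
    · simp; omega
    · simp
  · intro s hs
    rw [mem_tri] at hs
    have e1 : i + 1 - (s.1+1) - s.2 = i - s.1 - s.2 := by omega
    have e2 := genBinom_succ p₀ s.1
    have hco : coefA p₀ q₀ r₀ σ i s.1 s.2 * (p₀ - s.1)
        = Bc1 p₀ q₀ r₀ σ i (s.1+1, s.2) := by
      simp only [Bc1, coefA, e1]
      push_cast
      linear_combination (-(Nat.factorial i : ℝ) * ((-1)^s.2 * genBinom q₀ s.2) *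
        (σ^(i-s.1-s.2) * genBinom r₀ (i-s.1-s.2))) * e2
    rw [hco]

lemma sumB (i : ℕ) :
    ∑ s ∈ tri i, -(C (coefA p₀ q₀ r₀ σ i s.1 s.2 * (q₀ - s.2)) * Mp c d σ τ (i+1) (s.1, s.2+1))
      = ∑ s ∈ tri (i+1), C (Bc2 p₀ q₀ r₀ σ i s) * Mp c d σ τ (i+1) s := by
  rw [← Finset.sum_filter_of_ne (p := fun s : ℕ × ℕ => s.2 ≠ 0)
    (f := fun s => C (Bc2 p₀ q₀ r₀ σ i s) * Mp c d σ τ (i+1) s)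
    (fun x _ hx h0 => hx (by simp [Bc2, h0]))]
  refine Finset.sum_nbij' (fun s => (s.1, s.2+1)) (fun s => (s.1, s.2-1))
    ?_ ?_ ?_ ?_ ?_
  · intro s hs
    rw [mem_tri] at hs
    simp only [Finset.mem_filter, mem_tri]
    omega
  · intro s hs
    simp only [Finset.mem_filter, mem_tri] at hs
    rw [mem_tri]
    omega
  · intro s _; simp
  · intro s hs
    simp only [Finset.mem_filter, mem_tri] at hs
    ext
    · simp
    · simp; omega
  · intro s hs
    rw [mem_tri] at hs
    have e1 : i + 1 - s.1 - (s.2+1) = i - s.1 - s.2 := by omega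
    have e2 := genBinom_succ q₀ s.2
    have hco : -(coefA p₀ q₀ r₀ σ i s.1 s.2 * (q₀ - s.2))
        = Bc2 p₀ q₀ r₀ σ i (s.1, s.2+1) := by
      simp only [Bc2, coefA, e1]
      push_cast
      linear_combination ((Nat.factorial i : ℝ) * genBinom p₀ s.1 * (-1)^s.2 *
        (σ^(i-s.1-s.2) * genBinom r₀ (i-s.1-s.2))) * e2
    rw [← neg_mul, ← map_neg, hco]

lemma sumC (i : ℕ) :
    ∑ s ∈ tri i, C (coefA p₀ q₀ r₀ σ i s.1 s.2 * ((r₀ - ((i - s.1 - s.2 : ℕ) : ℝ)) * σ))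
        * Mp c d σ τ (i+1) s
      = ∑ s ∈ tri (i+1), C (Bc3 p₀ q₀ r₀ σ i s) * Mp c d σ τ (i+1) s := by
  have hsub : tri i ⊆ tri (i+1) := fun s hs => mem_tri.2 (by have := mem_tri.1 hs; omega)
  rw [← Finset.sum_subset hsub (fun s hs hns => by
    have h1 := mem_tri.1 hs
    have h2 : i + 1 - s.1 - s.2 = 0 := by
      rw [mem_tri] at hns; omega
    simp [Bc3, h2])]
  refine Finset.sum_congr rfl (fun s hs => ?_)
  rw [mem_tri] at hs
  have e1 : i + 1 - s.1 - s.2 = (i - s.1 - s.2) + 1 := by omega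
  have e2 := genBinom_succ r₀ (i - s.1 - s.2)
  have hco : coefA p₀ q₀ r₀ σ i s.1 s.2 * ((r₀ - ((i - s.1 - s.2 : ℕ) : ℝ)) * σ)
      = Bc3 p₀ q₀ r₀ σ i s := by
    simp only [Bc3, coefA, e1]
    push_cast
    linear_combination (-(Nat.factorial i : ℝ) * genBinom p₀ s.1 *
      ((-1)^s.2 * genBinom q₀ s.2) * (σ^((i-s.1-s.2)+1))) * e2
  rw [hco]

lemma key_step (i : ℕ) :
    Dop c d σ τ (p₀ - i) (q₀ - i) (r₀ - i) (Epoly c d σ τ p₀ q₀ r₀ i)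
      = Epoly c d σ τ p₀ q₀ r₀ (i+1) := by
  rw [Epoly, Dop_sum]
  rw [Finset.sum_congr rfl (fun s hs => Dop_term c d σ τ p₀ q₀ r₀ i _ s (mem_tri.1 hs))]
  rw [Epoly]
  rw [Finset.sum_add_distrib, Finset.sum_sub_distrib, sub_eq_add_neg,
    ← Finset.sum_neg_distrib]
  rw [sumA, sumB, sumC]
  rw [← Finset.sum_add_distrib, ← Finset.sum_add_distrib]
  refine Finset.sum_congr rfl (fun s hs => ?_)
  rw [mem_tri] at hs
  have e1 : ((s.1:ℝ) + s.2 + ((i + 1 - s.1 - s.2 : ℕ) : ℝ)) = (i:ℝ) + 1 := by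
    have h : s.1 + s.2 + (i + 1 - s.1 - s.2) = i + 1 := by omega
    have h2 := congrArg (Nat.cast : ℕ → ℝ) h
    push_cast at h2
    linarith
  have hco : Bc1 p₀ q₀ r₀ σ i s + Bc2 p₀ q₀ r₀ σ i s + Bc3 p₀ q₀ r₀ σ i s
      = coefA p₀ q₀ r₀ σ (i+1) s.1 s.2 := by
    simp only [Bc1, Bc2, Bc3, coefA, Nat.factorial_succ]
    push_cast
    linear_combination ((Nat.factorial i : ℝ) * genBinom p₀ s.1 *
      ((-1:ℝ)^s.2 * genBinom q₀ s.2) * (σ^(i+1-s.1-s.2) * genBinom r₀ (i+1-s.1-s.2))) * e1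
  rw [← hco, map_add, map_add]
  ring

noncomputable def Vf (p q r : ℝ) (Q : Polynomial ℝ) (x : ℝ) : ℝ :=
  (x - c) ^ p * (d - x) ^ q * (σ * x + τ) ^ r * Q.eval x

lemma lin_pos (h1 : 0 < σ * c + τ) (h2 : 0 < σ * d + τ) {x : ℝ} (hx : x ∈ Set.Icc c d) :
    0 < σ * x + τ := by
  obtain ⟨hxc, hxd⟩ := hx
  rcases le_or_gt σ 0 with h | h
  · nlinarith
  · nlinarith

lemma hasDerivAt_Vf (p q r : ℝ) (Q : Polynomial ℝ) {x : ℝ} (hx : x ∈ Set.Ioo c d)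
    (hl : 0 < σ * x + τ) :
    HasDerivAt (Vf c d σ τ p q r Q)
      (Vf c d σ τ (p-1) (q-1) (r-1) (Dop c d σ τ p q r Q) x) x := by
  obtain ⟨hxc, hxd⟩ := hx
  have hc0 : (0:ℝ) < x - c := by linarith
  have hd0 : (0:ℝ) < d - x := by linarith
  have h1 : HasDerivAt (fun y : ℝ => (y - c) ^ p) (p * (x - c) ^ (p - 1) * 1) x := by
    exact (Real.hasDerivAt_rpow_const (Or.inl hc0.ne')).comp x
      ((hasDerivAt_id x).sub_const c)
  have h2 : HasDerivAt (fun y : ℝ => (d - y) ^ q) (q * (d - x) ^ (q - 1) * (-1)) x := by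
    exact (Real.hasDerivAt_rpow_const (Or.inl hd0.ne')).comp x
      ((hasDerivAt_id x).const_sub d)
  have hinner : HasDerivAt (fun y : ℝ => σ * y + τ) σ x := by
    simpa using (((hasDerivAt_id x).const_mul σ).add_const τ)
  have h3 : HasDerivAt (fun y : ℝ => (σ * y + τ) ^ r) (r * (σ * x + τ) ^ (r - 1) * σ) x :=
    by have := (Real.hasDerivAt_rpow_const (p := r) (Or.inl hl.ne')).comp x hinner; exact this
  have h4 : HasDerivAt (fun y : ℝ => Q.eval y) ((Polynomial.derivative Q).eval x) x :=
    Q.hasDerivAt x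
  have h := ((h1.mul h2).mul h3).mul h4
  convert h using 1
  iterate 3 rfl
  have e1 : (x - c) ^ p = (x - c) ^ (p - 1) * (x - c) := by
    rw [← Real.rpow_add_one hc0.ne' (p - 1), sub_add_cancel]
  have e2 : (d - x) ^ q = (d - x) ^ (q - 1) * (d - x) := by
    rw [← Real.rpow_add_one hd0.ne' (q - 1), sub_add_cancel]
  have e3 : (σ * x + τ) ^ r = (σ * x + τ) ^ (r - 1) * (σ * x + τ) := by
    rw [← Real.rpow_add_one hl.ne' (r - 1), sub_add_cancel]
  simp only [Vf, Dop, Lp, Polynomial.eval_add, Polynomial.eval_sub, Polynomial.eval_mul,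
    Polynomial.eval_C, Polynomial.eval_X, Pi.mul_apply, e1, e2, e3]
  ring

lemma Vf_shift (p q r : ℝ) (Q : Polynomial ℝ) {x : ℝ} (hx : x ∈ Set.Ioo c d)
    (hl : 0 < σ * x + τ) :
    Vf c d σ τ (p-1) (q-1) (r-1)
      ((Polynomial.X - Polynomial.C c) * (Polynomial.C d - Polynomial.X) * Lp σ τ * Q) x
      = Vf c d σ τ p q r Q x := by
  obtain ⟨hxc, hxd⟩ := hx
  have hc0 : (0:ℝ) < x - c := by linarith
  have hd0 : (0:ℝ) < d - x := by linarith
  have e1 : (x - c) ^ p = (x - c) ^ (p - 1) * (x - c) := by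
    rw [← Real.rpow_add_one hc0.ne' (p - 1), sub_add_cancel]
  have e2 : (d - x) ^ q = (d - x) ^ (q - 1) * (d - x) := by
    rw [← Real.rpow_add_one hd0.ne' (q - 1), sub_add_cancel]
  have e3 : (σ * x + τ) ^ r = (σ * x + τ) ^ (r - 1) * (σ * x + τ) := by
    rw [← Real.rpow_add_one hl.ne' (r - 1), sub_add_cancel]
  simp only [Vf, Lp, Polynomial.eval_add, Polynomial.eval_sub, Polynomial.eval_mul,
    Polynomial.eval_C, Polynomial.eval_X, e1, e2, e3]
  ring

lemma Vf_cont_pos (p q r : ℝ) (Q : Polynomial ℝ) {x : ℝ} (hxc : x - c ≠ 0) (hxd : d - x ≠ 0)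
    (hl : σ * x + τ ≠ 0) : ContinuousAt (Vf c d σ τ p q r Q) x := by
  apply ContinuousAt.mul
  apply ContinuousAt.mul
  apply ContinuousAt.mul
  · exact ((continuous_id.sub continuous_const).continuousAt).rpow_const
      (Or.inl (by simpa using hxc))
  · exact ((continuous_const.sub continuous_id).continuousAt).rpow_const
      (Or.inl (by simpa using hxd))
  · exact (((continuous_const.mul continuous_id).add
      continuous_const).continuousAt).rpow_const (Or.inl (by simpa using hl))
  · exact Q.continuousAt

lemma Vf_tendsto_left (hcd : c < d) (p q r : ℝ) (Q : Polynomial ℝ) (hp : 0 < p)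
    (hl : 0 < σ * c + τ) :
    Filter.Tendsto (Vf c d σ τ p q r Q) (nhdsWithin c (Set.Ioi c)) (nhds 0) := by
  have hcont : ContinuousAt (Vf c d σ τ p q r Q) c := by
    apply ContinuousAt.mul
    apply ContinuousAt.mul
    apply ContinuousAt.mul
    · exact ((continuous_id.sub continuous_const).continuousAt).rpow_const (Or.inr hp.le)
    · exact ((continuous_const.sub continuous_id).continuousAt).rpow_const
        (Or.inl (by simp only [Pi.sub_apply, id_eq]; intro h; nlinarith [sub_eq_zero.mp h]))
    · exact (((continuous_const.mul continuous_id).add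
        continuous_const).continuousAt).rpow_const (Or.inl (by simpa using hl.ne'))
    · exact Q.continuousAt
  have hval : Vf c d σ τ p q r Q c = 0 := by
    simp [Vf, Real.zero_rpow hp.ne']
  rw [← hval]
  exact (hcont.tendsto).mono_left nhdsWithin_le_nhds

lemma Vf_tendsto_right (hcd : c < d) (p q r : ℝ) (Q : Polynomial ℝ) (hq : 0 < q)
    (hl : 0 < σ * d + τ) :
    Filter.Tendsto (Vf c d σ τ p q r Q) (nhdsWithin d (Set.Iio d)) (nhds 0) := by
  have hcont : ContinuousAt (Vf c d σ τ p q r Q) d := by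
    apply ContinuousAt.mul
    apply ContinuousAt.mul
    apply ContinuousAt.mul
    · exact ((continuous_id.sub continuous_const).continuousAt).rpow_const
        (Or.inl (by simp only [Pi.sub_apply, id_eq]; intro h; nlinarith [sub_eq_zero.mp h]))
    · exact ((continuous_const.sub continuous_id).continuousAt).rpow_const (Or.inr hq.le)
    · exact (((continuous_const.mul continuous_id).add
        continuous_const).continuousAt).rpow_const (Or.inl (by simpa using hl.ne'))
    · exact Q.continuousAt
  have hval : Vf c d σ τ p q r Q d = 0 := by
    simp [Vf, Real.zero_rpow hq.ne']
  rw [← hval]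
  exact (hcont.tendsto).mono_left nhdsWithin_le_nhds

lemma Vf_integrableOn (hcd : c < d) (p q r : ℝ) (Q : Polynomial ℝ)
    (hp : -1 < p) (hq : -1 < q) (hl1 : 0 < σ * c + τ) (hl2 : 0 < σ * d + τ) :
    IntegrableOn (Vf c d σ τ p q r Q) (Set.Ioo c d) volume := by
  set m := (c + d) / 2 with hm
  have hmc : c < m := by rw [hm]; linarith
  have hmd : m < d := by rw [hm]; linarith
  have hlin : ∀ x ∈ Set.Icc c d, 0 < σ * x + τ := fun x hx => lin_pos c d σ τ hl1 hl2 hx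
  -- left piece
  have hL : IntegrableOn (Vf c d σ τ p q r Q) (Set.Ioc c m) volume := by
    have hf1 : IntegrableOn (fun x => (x - c) ^ p) (Set.Ioc c m) volume := by
      have h0 : IntervalIntegrable (fun y : ℝ => y ^ p) volume 0 (m - c) :=
        intervalIntegral.intervalIntegrable_rpow' hp
      have h1 := h0.comp_sub_right c
      rw [zero_add, sub_add_cancel] at h1
      exact (intervalIntegrable_iff_integrableOn_Ioc_of_le hmc.le).mp h1
    set g : ℝ → ℝ := fun x => (d - x) ^ q * ((σ * x + τ) ^ r * Q.eval x) with hg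
    have hgc : ContinuousOn g (Set.Icc c m) := by
      intro x hx
      have hxd : d - x ≠ 0 := by
        have := hx.2; simp only [ne_eq, sub_eq_zero]; intro h; subst h; linarith
      have hxl : σ * x + τ ≠ 0 :=
        (hlin x ⟨hx.1, by linarith [hx.2]⟩).ne'
      apply ContinuousAt.continuousWithinAt
      apply ContinuousAt.mul
      · exact ((continuous_const.sub continuous_id).continuousAt).rpow_const
          (Or.inl (by simpa using hxd))
      · exact ContinuousAt.mul
          ((((continuous_const.mul continuous_id).add
            continuous_const).continuousAt).rpow_const (Or.inl (by simpa using hxl)))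
          Q.continuousAt
    obtain ⟨C, hC⟩ := isCompact_Icc.exists_bound_of_continuousOn hgc
    have hmeas : AEStronglyMeasurable g (volume.restrict (Set.Ioc c m)) :=
      (hgc.mono (Set.Ioc_subset_Icc_self)).aestronglyMeasurable measurableSet_Ioc
    have hbdd : ∀ᵐ x ∂(volume.restrict (Set.Ioc c m)), ‖g x‖ ≤ C := by
      rw [ae_restrict_iff' measurableSet_Ioc]
      exact Filter.Eventually.of_forall fun x hx => hC x (Set.Ioc_subset_Icc_self hx)
    have h2 : IntegrableOn (fun x => g x * (x - c) ^ p) (Set.Ioc c m) volume :=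
      MeasureTheory.Integrable.bdd_mul hf1 hmeas hbdd
    exact IntegrableOn.congr_fun h2 (fun x _ => by simp only [Vf, hg]; ring) measurableSet_Ioc
  -- right piece
  have hR : IntegrableOn (Vf c d σ τ p q r Q) (Set.Ioc m d) volume := by
    have hf1 : IntegrableOn (fun x => (d - x) ^ q) (Set.Ioc m d) volume := by
      have h0 : IntervalIntegrable (fun y : ℝ => y ^ q) volume 0 (d - m) :=
        intervalIntegral.intervalIntegrable_rpow' hq
      have h1 := h0.comp_sub_left d
      rw [sub_zero, sub_sub_cancel] at h1
      exact (intervalIntegrable_iff_integrableOn_Ioc_of_le hmd.le).mp h1.symm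
    set g : ℝ → ℝ := fun x => (x - c) ^ p * ((σ * x + τ) ^ r * Q.eval x) with hg
    have hgc : ContinuousOn g (Set.Icc m d) := by
      intro x hx
      have hxc : x - c ≠ 0 := by
        have := hx.1; simp only [ne_eq, sub_eq_zero]; intro h; subst h; linarith
      have hxl : σ * x + τ ≠ 0 :=
        (hlin x ⟨by linarith [hx.1], hx.2⟩).ne'
      apply ContinuousAt.continuousWithinAt
      apply ContinuousAt.mul
      · exact ((continuous_id.sub continuous_const).continuousAt).rpow_const
          (Or.inl (by simpa using hxc))
      · exact ContinuousAt.mul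
          ((((continuous_const.mul continuous_id).add
            continuous_const).continuousAt).rpow_const (Or.inl (by simpa using hxl)))
          Q.continuousAt
    obtain ⟨C, hC⟩ := isCompact_Icc.exists_bound_of_continuousOn hgc
    have hmeas : AEStronglyMeasurable g (volume.restrict (Set.Ioc m d)) :=
      (hgc.mono (Set.Ioc_subset_Icc_self)).aestronglyMeasurable measurableSet_Ioc
    have hbdd : ∀ᵐ x ∂(volume.restrict (Set.Ioc m d)), ‖g x‖ ≤ C := by
      rw [ae_restrict_iff' measurableSet_Ioc]
      exact Filter.Eventually.of_forall fun x hx => hC x (Set.Ioc_subset_Icc_self hx)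
    have h2 : IntegrableOn (fun x => g x * (d - x) ^ q) (Set.Ioc m d) volume :=
      MeasureTheory.Integrable.bdd_mul hf1 hmeas hbdd
    exact IntegrableOn.congr_fun h2 (fun x _ => by simp only [Vf, hg]; ring) measurableSet_Ioc
  exact (hL.union hR).mono_set (fun x hx => by
    rcases le_or_gt x m with h | h
    · exact Or.inl ⟨hx.1, h⟩
    · exact Or.inr ⟨h, hx.2.le⟩)

lemma integral_Dop_zero (hcd : c < d) (hl1 : 0 < σ * c + τ) (hl2 : 0 < σ * d + τ)
    (p q r : ℝ) (Q : Polynomial ℝ) (hp : 0 < p) (hq : 0 < q) :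
    ∫ x in Set.Ioo c d, Vf c d σ τ (p-1) (q-1) (r-1) (Dop c d σ τ p q r Q) x = 0 := by
  have hint : IntegrableOn (Vf c d σ τ (p-1) (q-1) (r-1) (Dop c d σ τ p q r Q))
      (Set.Ioo c d) volume :=
    Vf_integrableOn c d σ τ hcd _ _ _ _ (by linarith) (by linarith) hl1 hl2
  have hii : IntervalIntegrable (Vf c d σ τ (p-1) (q-1) (r-1) (Dop c d σ τ p q r Q))
      volume c d := by
    rw [intervalIntegrable_iff_integrableOn_Ioc_of_le hcd.le]
    exact (integrableOn_Ioc_iff_integrableOn_Ioo (f := Vf c d σ τ (p-1) (q-1) (r-1) (Dop c d σ τ p q r Q))).mpr hint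
  have h0 := intervalIntegral.integral_eq_sub_of_hasDerivAt_of_tendsto hcd
    (fun x hx => hasDerivAt_Vf c d σ τ p q r Q hx
      (lin_pos c d σ τ hl1 hl2 (Set.Ioo_subset_Icc_self hx))) hii
    (Vf_tendsto_left c d σ τ hcd p q r Q hp hl1)
    (Vf_tendsto_right c d σ τ hcd p q r Q hq hl2)
  rw [intervalIntegral.integral_of_le hcd.le, integral_Ioc_eq_integral_Ioo] at h0
  simpa using h0

lemma Dop_mul (p q r : ℝ) (Q T : Polynomial ℝ) :
    Dop c d σ τ p q r (Q * T) = Dop c d σ τ p q r Q * T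
      + (Polynomial.X - Polynomial.C c) * (Polynomial.C d - Polynomial.X) * Lp σ τ
          * (Q * Polynomial.derivative T) := by
  simp only [Dop, derivative_mul]
  ring

lemma ortho_aux (hcd : c < d) (hl1 : 0 < σ * c + τ) (hl2 : 0 < σ * d + τ) (n : ℕ)
    (hp : (n:ℝ) - 1 < p₀) (hq : (n:ℝ) - 1 < q₀) :
    ∀ i, i ≤ n → ∀ T : Polynomial ℝ, Polynomial.derivative^[i] T = 0 →
      ∫ x in Set.Ioo c d,
        Vf c d σ τ (p₀ - i) (q₀ - i) (r₀ - i) (Epoly c d σ τ p₀ q₀ r₀ i * T) x = 0 := by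
  intro i
  induction i with
  | zero =>
    intro _ T hT
    simp only [Function.iterate_zero, id_eq] at hT
    subst hT
    simp [Vf]
  | succ i ih =>
    intro hin T hT
    have hi : (i:ℝ) + 1 ≤ n := by exact_mod_cast Nat.cast_le.mpr hin
    have hpi : 0 < p₀ - i := by linarith
    have hqi : 0 < q₀ - i := by linarith
    have hc1 : p₀ - ((i+1 : ℕ):ℝ) = (p₀ - i) - 1 := by push_cast; ring
    have hc2 : q₀ - ((i+1 : ℕ):ℝ) = (q₀ - i) - 1 := by push_cast; ring
    have hc3 : r₀ - ((i+1 : ℕ):ℝ) = (r₀ - i) - 1 := by push_cast; ring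
    rw [hc1, hc2, hc3]
    have h0 := integral_Dop_zero c d σ τ hcd hl1 hl2 (p₀ - i) (q₀ - i) (r₀ - i)
      (Epoly c d σ τ p₀ q₀ r₀ i * T) hpi hqi
    have hptw : ∀ x ∈ Set.Ioo c d,
        Vf c d σ τ (p₀ - i - 1) (q₀ - i - 1) (r₀ - i - 1)
          (Dop c d σ τ (p₀ - i) (q₀ - i) (r₀ - i) (Epoly c d σ τ p₀ q₀ r₀ i * T)) x
        = Vf c d σ τ (p₀ - i - 1) (q₀ - i - 1) (r₀ - i - 1)
            (Epoly c d σ τ p₀ q₀ r₀ (i+1) * T) x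
          + Vf c d σ τ (p₀ - i) (q₀ - i) (r₀ - i)
              (Epoly c d σ τ p₀ q₀ r₀ i * Polynomial.derivative T) x := by
      intro x hx
      have hlx := lin_pos c d σ τ hl1 hl2 (Set.Ioo_subset_Icc_self hx)
      rw [Dop_mul, key_step]
      have hVadd : ∀ (Q1 Q2 : Polynomial ℝ),
          Vf c d σ τ (p₀ - i - 1) (q₀ - i - 1) (r₀ - i - 1) (Q1 + Q2) x
          = Vf c d σ τ (p₀ - i - 1) (q₀ - i - 1) (r₀ - i - 1) Q1 x
            + Vf c d σ τ (p₀ - i - 1) (q₀ - i - 1) (r₀ - i - 1) Q2 x := by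
        intro Q1 Q2; simp only [Vf, Polynomial.eval_add]; ring
      rw [hVadd, Vf_shift c d σ τ (p₀ - i) (q₀ - i) (r₀ - i) _ hx hlx]
    rw [MeasureTheory.setIntegral_congr_fun measurableSet_Ioo hptw] at h0
    have hI1 : IntegrableOn (Vf c d σ τ (p₀ - i - 1) (q₀ - i - 1) (r₀ - i - 1)
        (Epoly c d σ τ p₀ q₀ r₀ (i+1) * T)) (Set.Ioo c d) volume :=
      Vf_integrableOn c d σ τ hcd _ _ _ _ (by linarith) (by linarith) hl1 hl2
    have hI2 : IntegrableOn (Vf c d σ τ (p₀ - i) (q₀ - i) (r₀ - i)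
        (Epoly c d σ τ p₀ q₀ r₀ i * Polynomial.derivative T)) (Set.Ioo c d) volume :=
      Vf_integrableOn c d σ τ hcd _ _ _ _ (by linarith) (by linarith) hl1 hl2
    rw [MeasureTheory.integral_add hI1 hI2] at h0
    have hIH := ih (by omega) (Polynomial.derivative T)
      (by rw [← Function.iterate_succ_apply]; exact hT)
    rw [hIH] at h0
    linarith

lemma sum_to_tri {M : Type*} [AddCommMonoid M] (n : ℕ) (f : ℕ → ℕ → M) :
    ∑ k ∈ Finset.range (n+1), ∑ j ∈ Finset.range (n-k+1), f k j
      = ∑ s ∈ tri n, f s.1 s.2 := by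
  rw [tri, Finset.sum_filter, Finset.sum_product]
  refine Finset.sum_congr rfl fun k hk => ?_
  rw [Finset.mem_range] at hk
  rw [← Finset.sum_subset (Finset.range_subset_range.mpr (by omega : n - k + 1 ≤ n + 1))
    (fun j _ hj => by
      rw [Finset.mem_range] at hj
      rw [if_neg (by omega)])]
  refine Finset.sum_congr rfl fun j hj => ?_
  rw [Finset.mem_range] at hj
  rw [if_pos (by omega)]

lemma Epoly_left (a α β γ : ℝ) (n : ℕ) :
    Epoly a 0 (-1) 1 (α+n) (β+n) (γ+n) n
      = C ((n.factorial : ℝ)) * Spoly a α β γ n := by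
  rw [Spoly, sum_to_tri, Finset.mul_sum, Epoly]
  refine Finset.sum_congr rfl fun s hs => ?_
  rw [mem_tri] at hs
  rw [Mp]
  have h1 : (C (0:ℝ) - X) = C (-1:ℝ) * X := by
    rw [map_zero, map_neg, map_one]
    ring
  have h2 : Lp (-1:ℝ) 1 = C (-1:ℝ) * (X - 1) := by
    rw [Lp]
    simp only [map_neg, map_one]
    ring
  rw [h1, h2, mul_pow, mul_pow, ← map_pow, ← map_pow]
  have hsign : ((-1:ℝ))^s.2 * (-1)^(n-s.1-s.2) * ((-1)^(n-s.2) * (-1)^(s.1+s.2)) = 1 := by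
    rw [← pow_add, ← pow_add, ← pow_add,
      show s.2 + (n-s.1-s.2) + ((n-s.2) + (s.1+s.2)) = 2*n from by omega, pow_mul]
    norm_num
  have hc : coefA (α+↑n) (β+↑n) (γ+↑n) (-1) n s.1 s.2 * ((-1:ℝ)^(n-s.2) * (-1)^(s.1+s.2))
      = (n.factorial : ℝ) *
        (genBinom (α+n) s.1 * genBinom (β+n) s.2 * genBinom (γ+n) (n-s.1-s.2)) := by
    rw [coefA]
    linear_combination ((n.factorial:ℝ) * genBinom (α+↑n) s.1 * genBinom (β+↑n) s.2 *
      genBinom (γ+↑n) (n-s.1-s.2)) * hsign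
  have hc' := congrArg C hc
  simp only [map_mul] at hc'
  simp only [map_mul]
  linear_combination ((X - C a)^(n-s.1) * X^(n-s.2) * (X-1)^(s.1+s.2)) * hc'

lemma Epoly_right (a α β γ : ℝ) (n : ℕ) :
    Epoly 0 1 1 (-a) (β+n) (γ+n) (α+n) n
      = C ((-1:ℝ)^n * (n.factorial : ℝ)) * Spoly a α β γ n := by
  rw [Spoly, sum_to_tri, Finset.mul_sum, Epoly]
  refine Finset.sum_nbij' (fun s => (n - s.1 - s.2, s.1)) (fun t => (t.2, n - t.1 - t.2))
    ?_ ?_ ?_ ?_ ?_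
  · intro s hs; rw [mem_tri] at hs ⊢; dsimp only; omega
  · intro t ht; rw [mem_tri] at ht ⊢; dsimp only; omega
  · intro s hs; rw [mem_tri] at hs; obtain ⟨k, j⟩ := s
    rw [Prod.ext_iff]
    exact ⟨rfl, by show n - (n - k - j) - k = j; omega⟩
  · intro t ht; rw [mem_tri] at ht; obtain ⟨k, j⟩ := t
    rw [Prod.ext_iff]
    exact ⟨by show n - j - (n - k - j) = k; omega, rfl⟩
  · intro s hs
    rw [mem_tri] at hs
    dsimp only
    rw [show n - (n - s.1 - s.2) = s.1 + s.2 from by omega]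
    rw [show (n - s.1 - s.2) + s.1 = n - s.2 from by omega]
    rw [show s.1 + s.2 - s.1 = s.2 from by omega]
    rw [Mp]
    have h1 : (X - C (0:ℝ)) = X := by simp
    have h2 : (C (1:ℝ) - X) = C (-1:ℝ) * (X - 1) := by
      simp only [map_neg, map_one]
      ring
    have h3 : Lp (1:ℝ) (-a) = X - C a := by
      rw [Lp]
      simp only [map_one, map_neg, one_mul]
      ring
    rw [h1, h2, h3, mul_pow, ← map_pow]
    have hsign : ((-1:ℝ))^s.2 * (-1)^(n-s.2) = (-1)^n := by
      rw [← pow_add, show s.2 + (n - s.2) = n from by omega]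
    have hc : coefA (β+↑n) (γ+↑n) (α+↑n) 1 n s.1 s.2 * ((-1:ℝ)^(n-s.2))
        = ((-1:ℝ)^n * (n.factorial : ℝ)) *
          (genBinom (α+n) (n-s.1-s.2) * genBinom (β+n) s.1 * genBinom (γ+n) s.2) := by
      rw [coefA]
      rw [one_pow]
      linear_combination ((n.factorial:ℝ) * genBinom (β+↑n) s.1 * genBinom (γ+↑n) s.2 *
        genBinom (α+↑n) (n-s.1-s.2)) * hsign
    have hc' := congrArg C hc
    simp only [map_mul] at hc'
    simp only [map_mul]
    linear_combination (X^(n-s.1) * (X-1)^(n-s.2) * (X - C a)^(s.1+s.2)) * hc'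

lemma e_pos (α β γ : ℝ) (n : ℕ) (hα : -1 < α) (hβ : -1 < β) (hγ : -1 < γ) :
    0 < genBinom (α + β + γ + 3 * n) n := by
  rw [genBinom]
  apply div_pos
  · apply Finset.prod_pos
    intro t ht
    rw [Finset.mem_range] at ht
    have h1 : (t:ℝ) + 1 ≤ (n:ℝ) := by exact_mod_cast ht
    have h0 : (0:ℝ) ≤ t := Nat.cast_nonneg t
    linarith
  · positivity

lemma Mterm_monic (a : ℝ) (n k j : ℕ) (hk : k ≤ n) (hj : k + j ≤ n) :
    ((X - C a) ^ (n-k) * X ^ (n-j) * (X - 1 : Polynomial ℝ) ^ (k+j)).Monic ∧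
      ((X - C a) ^ (n-k) * X ^ (n-j) * (X - 1 : Polynomial ℝ) ^ (k+j)).natDegree = 2*n := by
  have hX1 : (X - 1 : Polynomial ℝ) = X - C 1 := by rw [map_one]
  have m1 : ((X - C a : Polynomial ℝ) ^ (n-k)).Monic := (monic_X_sub_C a).pow _
  have m2 : ((X : Polynomial ℝ) ^ (n-j)).Monic := monic_X_pow _
  have m3 : ((X - 1 : Polynomial ℝ) ^ (k+j)).Monic := by
    rw [hX1]; exact (monic_X_sub_C 1).pow _
  refine ⟨(m1.mul m2).mul m3, ?_⟩
  rw [(m1.mul m2).natDegree_mul m3, m1.natDegree_mul m2, natDegree_pow, natDegree_pow,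
    natDegree_pow, natDegree_X_sub_C, natDegree_X, hX1, natDegree_X_sub_C]
  omega

lemma Spoly_natDegree_le (a α β γ : ℝ) (n : ℕ) :
    (Spoly a α β γ n).natDegree ≤ 2*n := by
  rw [Spoly]
  refine natDegree_sum_le_of_forall_le _ _ (fun k hk => ?_)
  refine natDegree_sum_le_of_forall_le _ _ (fun j hj => ?_)
  rw [Finset.mem_range] at hk hj
  have heq : C (genBinom (α + n) k * genBinom (β + n) j * genBinom (γ + n) (n - k - j)) *
      (X - C a) ^ (n-k) * X ^ (n-j) * (X - 1 : Polynomial ℝ) ^ (k+j)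
      = C (genBinom (α + n) k * genBinom (β + n) j * genBinom (γ + n) (n - k - j)) *
        ((X - C a) ^ (n-k) * X ^ (n-j) * (X - 1 : Polynomial ℝ) ^ (k+j)) := by ring
  rw [heq]
  refine (natDegree_C_mul_le _ _).trans ?_
  rw [(Mterm_monic a n k j (by omega) (by omega)).2]

lemma Spoly_coeff (a α β γ : ℝ) (n : ℕ) :
    (Spoly a α β γ n).coeff (2*n) = genBinom (α + β + γ + 3 * n) n := by
  rw [Spoly, finset_sum_coeff]
  have hterm : ∀ k ∈ Finset.range (n+1),
      (∑ j ∈ Finset.range (n-k+1),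
        C (genBinom (α + n) k * genBinom (β + n) j * genBinom (γ + n) (n - k - j)) *
          (X - C a) ^ (n-k) * X ^ (n-j) * (X - 1 : Polynomial ℝ) ^ (k+j)).coeff (2*n)
      = ∑ j ∈ Finset.range (n-k+1),
          genBinom (α + n) k * genBinom (β + n) j * genBinom (γ + n) (n - k - j) := by
    intro k hk
    rw [Finset.mem_range] at hk
    rw [finset_sum_coeff]
    refine Finset.sum_congr rfl (fun j hj => ?_)
    rw [Finset.mem_range] at hj
    have heq : C (genBinom (α + n) k * genBinom (β + n) j * genBinom (γ + n) (n - k - j)) *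
        (X - C a) ^ (n-k) * X ^ (n-j) * (X - 1 : Polynomial ℝ) ^ (k+j)
        = C (genBinom (α + n) k * genBinom (β + n) j * genBinom (γ + n) (n - k - j)) *
          ((X - C a) ^ (n-k) * X ^ (n-j) * (X - 1 : Polynomial ℝ) ^ (k+j)) := by ring
    obtain ⟨hmon, hdeg⟩ := Mterm_monic a n k j (by omega) (by omega)
    rw [heq, coeff_C_mul, ← hdeg, hmon.coeff_natDegree, mul_one]
  rw [Finset.sum_congr rfl hterm, vander3 n (α + n) (β + n) (γ + n),
    show (α + n) + (β + n) + (γ + n) = α + β + γ + 3 * n from by ring]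

end Core
end JA

/-- **Explicit expression for the diagonal Jacobi-Angelesco polynomial** `P_{n,n}`:
`C(α+β+γ+3n, n)⁻¹ Σ_{k=0}^{n} Σ_{j=0}^{n-k} C(α+n,k) C(β+n,j) C(γ+n,n-k-j)
(x-a)^{n-k} x^{n-j} (x-1)^{k+j}` is monic of degree `2n` and satisfies the
Jacobi-Angelesco orthogonality conditions. -/
theorem stmt_14 (a : ℝ) (ha : a < 0) (α β γ : ℝ)
    (hα : -1 < α) (hβ : -1 < β) (hγ : -1 < γ) (n : ℕ)
    (P : Polynomial ℝ)
    (hP : P = Polynomial.C (genBinom (α + β + γ + 3 * n) n)⁻¹ *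
      ∑ k ∈ Finset.range (n + 1), ∑ j ∈ Finset.range (n - k + 1),
        Polynomial.C (genBinom (α + n) k * genBinom (β + n) j *
            genBinom (γ + n) (n - k - j)) *
          (Polynomial.X - Polynomial.C a) ^ (n - k) * Polynomial.X ^ (n - j) *
          (Polynomial.X - 1) ^ (k + j)) :
    P.Monic ∧ P.natDegree = 2 * n ∧
      (∀ k < n,
        ∫ x in Set.Ioo a 0,
          P.eval x * ((x - a) ^ α * |x| ^ β * (1 - x) ^ γ) * x ^ k = 0) ∧
      (∀ k < n,
        ∫ x in Set.Ioo (0:ℝ) 1,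
          P.eval x * ((x - a) ^ α * x ^ β * (1 - x) ^ γ) * x ^ k = 0) := by
  have hP' : P = Polynomial.C (genBinom (α + β + γ + 3 * n) n)⁻¹ * JA.Spoly a α β γ n := by
    rw [hP, JA.Spoly]
  set e : ℝ := genBinom (α + β + γ + 3 * n) n with he_def
  have he : 0 < e := JA.e_pos α β γ n hα hβ hγ
  have he' : e ≠ 0 := he.ne'
  have hfac : ((n.factorial : ℝ)) ≠ 0 := by positivity
  -- coefficient and degree facts
  have hScoeff : (JA.Spoly a α β γ n).coeff (2*n) = e := JA.Spoly_coeff a α β γ n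
  have hSdeg : (JA.Spoly a α β γ n).natDegree ≤ 2*n := JA.Spoly_natDegree_le a α β γ n
  have hPdeg : P.natDegree ≤ 2*n := by
    rw [hP']
    exact (Polynomial.natDegree_C_mul_le _ _).trans hSdeg
  have hPcoeff : P.coeff (2*n) = 1 := by
    rw [hP', Polynomial.coeff_C_mul, hScoeff, inv_mul_cancel₀ he']
  have hmonic : P.Monic := Polynomial.monic_of_natDegree_le_of_coeff_eq_one (2*n) hPdeg hPcoeff
  refine ⟨hmonic, ?_, ?_, ?_⟩
  · exact le_antisymm hPdeg (Polynomial.le_natDegree_of_ne_zero (by rw [hPcoeff]; norm_num))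
  · -- interval (a, 0)
    intro k hk
    have hTk : Polynomial.derivative^[n] (Polynomial.X ^ k : Polynomial ℝ) = 0 :=
      Polynomial.iterate_derivative_eq_zero (by simpa [Polynomial.natDegree_X_pow] using hk)
    have hortho := JA.ortho_aux a 0 (-1) 1 (α+n) (β+n) (γ+n) ha
      (by linarith) (by norm_num) n (by linarith) (by linarith) n le_rfl
      (Polynomial.X ^ k) hTk
    have heqon : Set.EqOn
        (fun x => P.eval x * ((x - a) ^ α * |x| ^ β * (1 - x) ^ γ) * x ^ k)
        (fun x => (e⁻¹ * ((n.factorial : ℝ))⁻¹) *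
          JA.Vf a 0 (-1) 1 (α+n-n) (β+n-n) (γ+n-n)
            (JA.Epoly a 0 (-1) 1 (α+n) (β+n) (γ+n) n * Polynomial.X ^ k) x)
        (Set.Ioo a 0) := by
      intro x hx
      obtain ⟨hx1, hx2⟩ := hx
      have habs : |x| = -x := abs_of_neg hx2
      simp only [JA.Vf, Polynomial.eval_mul, Polynomial.eval_pow, Polynomial.eval_X]
      rw [JA.Epoly_left, show α+(n:ℝ)-n = α from by ring, show β+(n:ℝ)-n = β from by ring,
        show γ+(n:ℝ)-n = γ from by ring, zero_sub, show (-1)*x + 1 = 1 - x from by ring,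
        hP', habs]
      simp only [Polynomial.eval_mul, Polynomial.eval_C]
      field_simp
    rw [MeasureTheory.setIntegral_congr_fun measurableSet_Ioo heqon,
      MeasureTheory.integral_const_mul, hortho, mul_zero]
  · -- interval (0, 1)
    intro k hk
    have hTk : Polynomial.derivative^[n] (Polynomial.X ^ k : Polynomial ℝ) = 0 :=
      Polynomial.iterate_derivative_eq_zero (by simpa [Polynomial.natDegree_X_pow] using hk)
    have hortho := JA.ortho_aux 0 1 1 (-a) (β+n) (γ+n) (α+n) (by norm_num)
      (by linarith) (by linarith) n (by linarith) (by linarith) n le_rfl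
      (Polynomial.X ^ k) hTk
    have hsgn : ((-1:ℝ)^n * (n.factorial : ℝ)) ≠ 0 := by
      apply mul_ne_zero _ hfac
      exact pow_ne_zero _ (by norm_num)
    have heqon : Set.EqOn
        (fun x => P.eval x * ((x - a) ^ α * x ^ β * (1 - x) ^ γ) * x ^ k)
        (fun x => (e⁻¹ * ((-1:ℝ)^n * (n.factorial : ℝ))⁻¹) *
          JA.Vf 0 1 1 (-a) (β+n-n) (γ+n-n) (α+n-n)
            (JA.Epoly 0 1 1 (-a) (β+n) (γ+n) (α+n) n * Polynomial.X ^ k) x)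
        (Set.Ioo 0 1) := by
      intro x hx
      obtain ⟨hx1, hx2⟩ := hx
      simp only [JA.Vf, Polynomial.eval_mul, Polynomial.eval_pow, Polynomial.eval_X]
      rw [JA.Epoly_right, show α+(n:ℝ)-n = α from by ring, show β+(n:ℝ)-n = β from by ring,
        show γ+(n:ℝ)-n = γ from by ring, sub_zero, show (1:ℝ)*x + -a = x - a from by ring,
        hP']
      simp only [Polynomial.eval_mul, Polynomial.eval_C]
      field_simp
    rw [MeasureTheory.setIntegral_congr_fun measurableSet_Ioo heqon,
      MeasureTheory.integral_const_mul, hortho, mul_zero]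
end

section
/- Let a < 0 and α, β, γ > −1, and let n ≥ 1. If P is a monic polynomial of degree 2n satisfying ∫_a^0 P(x)(x−a)^{α}|x|^{β}(1−x)^{γ} x^k dx = 0 for k = 0,…,n−1 and ∫_0^1 P(x)(x−a)^{α} x^{β}(1−x)^{γ} x^k dx = 0 for k = 0,…,n−1, then the coefficient of x^{2n−1} in P equals A_{n,n} = − n [ α + β + 2n + a(β + γ + 2n) ] / (α + β + γ + 3n). -/
/-!
Let `w(x) = |x - a|^α |x|^β |x - 1|^γ` and `π(x) = (x - a) x (x - 1)`. The Rodrigues-type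
polynomial `Q = w⁻¹ (d/dx)ⁿ (w πⁿ)` is orthogonal to `xᵏ`, `k < n`, on both `(a, 0)` and `(0, 1)`:
integrate by parts `n` times; no boundary terms appear because `w π` vanishes at `a`, `0`, `1`.
Peeling off one derivative at a time, `Q` is built by `n` steps `G ↦ ρ G + π G'` with quadratic
Pearson polynomials `ρ`, and the two top coefficients of `G` follow a two-term recursion: `Q` has
degree `2n`, nonzero leading coefficient `λ`, and subleading coefficient `-n λ T / K`, where
`T = α + β + 2n + a (β + γ + 2n)` and `K = α + β + γ + 3n`.

The system is normal: a nonzero polynomial of degree `< 2n` orthogonal to `xᵏ`, `k < n`, on two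
disjoint intervals must change sign `n` times in each of them, which is too many roots. So
`P = Q / λ`, and its coefficient of `x^(2n-1)` is `-n T / K`.
-/

open MeasureTheory Polynomial Set Filter Topology

lemma intervalIntegrable_abs_rpow {p : ℝ} (hp : -1 < p) (b : ℝ) :
    IntervalIntegrable (fun x : ℝ => |x| ^ p) volume 0 b := by
  have hpos : ∀ c, 0 ≤ c → IntervalIntegrable (fun x : ℝ => |x| ^ p) volume 0 c := fun c hc =>
    (intervalIntegral.intervalIntegrable_rpow' hp).congr_ae <|
      (ae_restrict_iff' measurableSet_uIoc).2 <| .of_forall fun x hx => by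
        rw [uIoc_of_le hc] at hx
        simp [abs_of_pos hx.1]
  rcases le_total 0 b with hb | hb
  · exact hpos b hb
  · simpa using (IntervalIntegrable.iff_comp_neg (f := fun x : ℝ => |x| ^ p)).1
      (hpos (-b) (by linarith))

lemma intervalIntegrable_abs_sub_rpow {p : ℝ} (hp : -1 < p) (e b : ℝ) :
    IntervalIntegrable (fun x : ℝ => |x - e| ^ p) volume e b := by
  simpa using (intervalIntegrable_abs_rpow hp (b - e)).comp_sub_right e

lemma continuous_abs_rpow_mul_self {κ : ℝ} (hκ : -1 < κ) :
    Continuous fun t : ℝ => |t| ^ κ * t := by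
  refine continuous_iff_continuousAt.2 fun t => ?_
  rcases eq_or_ne t 0 with rfl | ht
  · have hlim : Tendsto (fun t : ℝ => |t| ^ (κ + 1)) (𝓝 0) (𝓝 0) := by
      have h := (Real.continuousAt_rpow_const 0 (κ + 1) (Or.inr (by linarith))).tendsto.comp
        (continuous_abs.tendsto' (0 : ℝ) 0 abs_zero)
      rwa [Real.zero_rpow (by linarith)] at h
    rw [ContinuousAt, mul_zero]
    refine squeeze_zero_norm (fun s => le_of_eq ?_) hlim
    rw [Real.rpow_add_one' (abs_nonneg s) (by linarith), norm_mul, Real.norm_eq_abs,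
      abs_of_nonneg (Real.rpow_nonneg (abs_nonneg s) κ), Real.norm_eq_abs]
  · exact ((continuous_abs.continuousAt.rpow_const (Or.inl (abs_ne_zero.2 ht))).mul
      continuousAt_id)

lemma hasDerivAt_abs_sub_rpow {e κ x : ℝ} (hx : x ≠ e) :
    HasDerivAt (fun y => |y - e| ^ κ) (κ * |x - e| ^ κ / (x - e)) x := by
  have hne : x - e ≠ 0 := sub_ne_zero.2 hx
  have h := ((hasDerivAt_abs hne).comp x ((hasDerivAt_id x).sub_const e)).rpow_const
    (p := κ) (Or.inl (by simpa using hne))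
  refine h.congr_deriv ?_
  change _ * |x - e| ^ (κ - 1) = _
  rw [Real.rpow_sub_one (abs_ne_zero.2 hne)]
  rcases hne.lt_or_gt with h | h
  · simp [h, abs_of_neg h]
    field_simp
    ring
  · simp [h, abs_of_pos h]
    field_simp

lemma integrableOn_Ioo_abs_sub_rpow_mul {l u p q : ℝ} (hlu : l < u) (hp : -1 < p) (hq : -1 < q)
    {φ : ℝ → ℝ} (hφ : ContinuousOn φ (Icc l u)) :
    IntegrableOn (fun x => |x - l| ^ p * |x - u| ^ q * φ x) (Ioo l u) := by
  obtain ⟨m, hlm, hmu⟩ := exists_between hlu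
  have hcont : ∀ (e κ : ℝ) (s : Set ℝ), s ⊆ Icc l u → e ∉ s →
      ContinuousOn (fun x => |x - e| ^ κ * φ x) s := fun e κ s hs he =>
    ((continuous_id.sub continuous_const).abs.continuousOn.rpow_const fun x hx =>
      Or.inl (abs_ne_zero.2 (sub_ne_zero.2 (ne_of_mem_of_not_mem hx he)))).mul (hφ.mono hs)
  have hleft : IntervalIntegrable (fun x => |x - l| ^ p * |x - u| ^ q * φ x) volume l m := by
    have := (intervalIntegrable_abs_sub_rpow hp l m).mul_continuousOn (hcont u q _
      (by rw [uIcc_of_le hlm.le]; exact Icc_subset_Icc_right hmu.le)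
      (by rw [uIcc_of_le hlm.le]; exact fun h => by linarith [h.2]))
    simpa only [mul_assoc] using this
  have hright : IntervalIntegrable (fun x => |x - l| ^ p * |x - u| ^ q * φ x) volume m u := by
    have := (intervalIntegrable_abs_sub_rpow hq u m).symm.mul_continuousOn (hcont l p _
      (by rw [uIcc_of_le hmu.le]; exact Icc_subset_Icc_left hlm.le)
      (by rw [uIcc_of_le hmu.le]; exact fun h => by linarith [h.1]))
    simpa only [mul_left_comm, mul_assoc] using this
  exact (intervalIntegrable_iff_integrableOn_Ioo_of_le hlu.le).1 (hleft.trans hright)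

namespace Polynomial

lemma eval_mul_eval_pos_of_roots_eq_zero {q : ℝ[X]} (hq : q.roots = 0) (hq0 : q ≠ 0) (x y : ℝ) :
    0 < q.eval x * q.eval y := by
  have hne : ∀ t, q.eval t ≠ 0 := fun t ht => by simpa [hq] using (mem_roots hq0).2 ht
  by_contra! h
  have h0 : (0 : ℝ) ∈ uIcc (q.eval x) (q.eval y) := by
    rw [mem_uIcc]
    rcases mul_nonpos_iff.1 h with h | h
    exacts [Or.inr ⟨h.2, h.1⟩, Or.inl h]
  obtain ⟨t, -, ht⟩ := intermediate_value_uIcc q.continuous.continuousOn h0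
  exact hne t ht

lemma eval_mul_eval_nonneg_of_even_rootMultiplicity {E : ℝ[X]} {s : Set ℝ} (hs : s.OrdConnected)
    (hE : E ≠ 0) (heven : ∀ z ∈ s, Even (E.rootMultiplicity z)) {x y : ℝ} (hx : x ∈ s)
    (hy : y ∈ s) : 0 ≤ E.eval x * E.eval y := by
  obtain ⟨q, hfac, -, hq⟩ := E.exists_prod_multiset_X_sub_C_mul
  have hq0 : q ≠ 0 := by rintro rfl; exact hE (by simpa using hfac.symm)
  have heval : ∀ t, E.eval t = (E.roots.map fun z => t - z).prod * q.eval t := fun t => by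
    conv_lhs => rw [← hfac]
    simp [eval_multiset_prod, Multiset.map_map]
  have hfactor : ∀ z ∈ E.roots.toFinset, 0 ≤ ((x - z) * (y - z)) ^ E.roots.count z := by
    intro z _
    by_cases hz : z ∈ s
    · rw [count_roots]
      exact (heven z hz).pow_nonneg _
    · refine pow_nonneg (not_lt.1 fun hneg => hz (hs.uIcc_subset hx hy ?_)) _
      rw [mem_uIcc]
      rcases mul_neg_iff.1 hneg with h | h <;> [right; left] <;> constructor <;> linarith [h.1, h.2]
  calc (0 : ℝ) ≤ (E.roots.map fun z => (x - z) * (y - z)).prod * (q.eval x * q.eval y) := by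
        rw [Finset.prod_multiset_map_count]
        exact mul_nonneg (Finset.prod_nonneg hfactor)
          (eval_mul_eval_pos_of_roots_eq_zero hq hq0 x y).le
    _ = E.eval x * E.eval y := by
        rw [heval x, heval y, Multiset.prod_map_mul]
        ring

open scoped Classical in
noncomputable def oddRootsIn (p : ℝ[X]) (s : Set ℝ) : Finset ℝ :=
  {z ∈ p.roots.toFinset | z ∈ s ∧ Odd (p.rootMultiplicity z)}

lemma mem_oddRootsIn {p : ℝ[X]} {s : Set ℝ} {z : ℝ} :
    z ∈ oddRootsIn p s ↔ z ∈ p.roots.toFinset ∧ z ∈ s ∧ Odd (p.rootMultiplicity z) := by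
  simp [oddRootsIn]

lemma map_mul_eq_zero_of_natDegree_lt {R M : Type*} [CommSemiring R] [AddCommMonoid M]
    [Module R M] (L : R[X] →ₗ[R] M) {D q : R[X]} {n : ℕ}
    (horth : ∀ k < n, L (X ^ k * D) = 0) (hq : q.natDegree < n) : L (q * D) = 0 := by
  rw [q.as_sum_range' n hq, Finset.sum_mul, map_sum]
  refine Finset.sum_eq_zero fun k hk => ?_
  rw [← C_mul_X_pow_eq_monomial, mul_assoc, ← smul_eq_C_mul, map_smul,
    horth k (Finset.mem_range.1 hk), smul_zero]

lemma natDegree_sub_C_mul_lt {R : Type*} [CommRing R] {P Q : R[X]} {m : ℕ}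
    (hm : 0 < m) (hP : P.Monic) (hPdeg : P.natDegree = m) (hQ : Q.natDegree ≤ m) {c : R}
    (hc : c * Q.coeff m = 1) : (P - C c * Q).natDegree < m := by
  have hcoeff : (P - C c * Q).coeff m = 0 := by
    rw [coeff_sub, coeff_C_mul, hc, ← hPdeg, hP.coeff_natDegree, sub_self]
  have := natDegree_le_pred ((natDegree_sub_le_of_le hPdeg.le
    ((natDegree_C_mul_le c Q).trans hQ)).trans (max_self m).le) hcoeff
  omega

end Polynomial

lemma setIntegral_mul_eval_ne_zero {w : ℝ → ℝ} {E : ℝ[X]} {l u : ℝ} (hlu : l < u)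
    (hw : ∀ x ∈ Ioo l u, 0 < w x) (hint : IntegrableOn (fun x => w x * E.eval x) (Ioo l u))
    (hE : E ≠ 0) (hsign : ∀ x ∈ Ioo l u, ∀ y ∈ Ioo l u, 0 ≤ E.eval x * E.eval y) :
    ∫ x in Ioo l u, w x * E.eval x ≠ 0 := by
  have hroots : {x | E.IsRoot x}.Finite := finite_setOfPred_isRoot hE
  obtain ⟨x₀, hx₀, hEx₀⟩ := ((Ioo_infinite hlu).sdiff hroots).nonempty
  have hpos : 0 < ∫ x in Ioo l u, w x * E.eval x * E.eval x₀ := by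
    rw [setIntegral_pos_iff_support_of_nonneg_ae]
    · calc (0 : ENNReal) < volume (Ioo l u \ {x | E.IsRoot x}) := by
            rw [measure_sdiff_null (hroots.measure_zero _)]
            simp [hlu]
        _ ≤ _ := by
            refine measure_mono fun x hx => ⟨?_, hx.1⟩
            exact mul_ne_zero (mul_ne_zero (hw x hx.1).ne' hx.2) hEx₀
    · refine (ae_restrict_iff' measurableSet_Ioo).2 (.of_forall fun x hx => ?_)
      simpa only [Pi.zero_apply, mul_assoc] using
        mul_nonneg (hw x hx).le (hsign x hx x₀ hx₀)
    · exact hint.mul_const _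
  rw [integral_mul_const] at hpos
  exact left_ne_zero_of_mul hpos.ne'

noncomputable def weightedIntegral (w : ℝ → ℝ) (s : Set ℝ)
    (hw : ∀ g : ℝ[X], IntegrableOn (fun x => w x * g.eval x) s) : ℝ[X] →ₗ[ℝ] ℝ where
  toFun g := ∫ x in s, w x * g.eval x
  map_add' p q := by simp only [eval_add, mul_add]; exact integral_add (hw p) (hw q)
  map_smul' c p := by simp [mul_left_comm _ c, integral_const_mul]

lemma weightedIntegral_apply (w : ℝ → ℝ) (s : Set ℝ)
    (hw : ∀ g : ℝ[X], IntegrableOn (fun x => w x * g.eval x) s) (g : ℝ[X]) :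
    weightedIntegral w s hw g = ∫ x in s, w x * g.eval x := rfl

/-- If `D` had fewer than `n` odd-order roots in `(l, u)`, multiplying it by the product of the
`X - z` over them would give a polynomial of constant sign on `(l, u)` whose weighted integral
vanishes by orthogonality. -/
lemma le_card_oddRootsIn_of_orthogonal {w : ℝ → ℝ} {l u : ℝ} (hlu : l < u)
    (hw : ∀ x ∈ Ioo l u, 0 < w x)
    (hint : ∀ g : ℝ[X], IntegrableOn (fun x => w x * g.eval x) (Ioo l u))
    {D : ℝ[X]} (hD : D ≠ 0) {n : ℕ}
    (horth : ∀ k < n, weightedIntegral w (Ioo l u) hint (X ^ k * D) = 0) :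
    n ≤ (oddRootsIn D (Ioo l u)).card := by
  by_contra! hcard
  set s := oddRootsIn D (Ioo l u)
  set q : ℝ[X] := ∏ z ∈ s, (X - C z)
  have hq0 : q ≠ 0 := (monic_prod_of_monic _ _ fun z _ => monic_X_sub_C z).ne_zero
  have hqD : q * D ≠ 0 := mul_ne_zero hq0 hD
  have hmult : ∀ z, q.rootMultiplicity z = if z ∈ s then 1 else 0 := fun z => by
    rw [← count_roots, roots_prod_X_sub_C]
    split_ifs with h
    · exact Multiset.count_eq_one_of_mem s.nodup h
    · exact Multiset.count_eq_zero_of_notMem h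
  have heven : ∀ z ∈ Ioo l u, Even ((q * D).rootMultiplicity z) := by
    intro z hz
    rw [rootMultiplicity_mul hqD, hmult]
    by_cases hodd : Odd (D.rootMultiplicity z)
    · have hzs : z ∈ s := mem_oddRootsIn.2 ⟨Multiset.mem_toFinset.2 ((mem_roots hD).2
        ((rootMultiplicity_pos hD).1 hodd.pos)), hz, hodd⟩
      rw [if_pos hzs, add_comm]
      exact hodd.add_one
    · have hzs : z ∉ s := fun h => hodd (mem_oddRootsIn.1 h).2.2
      rw [if_neg hzs, zero_add]
      exact Nat.not_odd_iff_even.1 hodd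
  refine setIntegral_mul_eval_ne_zero hlu hw (hint _) hqD
    (fun x hx y hy =>
      eval_mul_eval_nonneg_of_even_rootMultiplicity ordConnected_Ioo hqD heven hx hy)
    (map_mul_eq_zero_of_natDegree_lt _ horth ?_)
  simpa [q] using hcard

lemma eq_zero_of_orthogonal_on_two_intervals {w₁ w₂ : ℝ → ℝ} {l₁ u₁ l₂ u₂ : ℝ}
    (h₁ : l₁ < u₁) (h₁₂ : u₁ ≤ l₂) (h₂ : l₂ < u₂)
    (hw₁ : ∀ x ∈ Ioo l₁ u₁, 0 < w₁ x) (hw₂ : ∀ x ∈ Ioo l₂ u₂, 0 < w₂ x)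
    (hint₁ : ∀ g : ℝ[X], IntegrableOn (fun x => w₁ x * g.eval x) (Ioo l₁ u₁))
    (hint₂ : ∀ g : ℝ[X], IntegrableOn (fun x => w₂ x * g.eval x) (Ioo l₂ u₂))
    {D : ℝ[X]} {n₁ n₂ : ℕ} (hdeg : D.natDegree < n₁ + n₂)
    (horth₁ : ∀ k < n₁, weightedIntegral w₁ (Ioo l₁ u₁) hint₁ (X ^ k * D) = 0)
    (horth₂ : ∀ k < n₂, weightedIntegral w₂ (Ioo l₂ u₂) hint₂ (X ^ k * D) = 0) :
    D = 0 := by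
  by_contra hD
  have hdisj : Disjoint (oddRootsIn D (Ioo l₁ u₁)) (oddRootsIn D (Ioo l₂ u₂)) :=
    Finset.disjoint_left.2 fun z hz₁ hz₂ => by
      have := (mem_oddRootsIn.1 hz₁).2.1.2
      have := (mem_oddRootsIn.1 hz₂).2.1.1
      linarith
  have hsub : oddRootsIn D (Ioo l₁ u₁) ∪ oddRootsIn D (Ioo l₂ u₂) ⊆ D.roots.toFinset :=
    Finset.union_subset (fun z hz => (mem_oddRootsIn.1 hz).1) (fun z hz => (mem_oddRootsIn.1 hz).1)
  have hcard := Finset.card_le_card hsub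
  rw [Finset.card_union_of_disjoint hdisj] at hcard
  have hcard₁ := le_card_oddRootsIn_of_orthogonal h₁ hw₁ hint₁ hD horth₁
  have hcard₂ := le_card_oddRootsIn_of_orthogonal h₂ hw₂ hint₂ hD horth₂
  have hroots := (Multiset.toFinset_card_le D.roots).trans (card_roots' D)
  omega

namespace JacobiAngelesco

noncomputable def nodePoly (a : ℝ) : ℝ[X] := (X - C a) * X * (X - 1)

noncomputable def weight (a α β γ : ℝ) (x : ℝ) : ℝ := |x - a| ^ α * |x| ^ β * |x - 1| ^ γ

/-- With `π = nodePoly a` and `w = weight a α β γ`, this is `π w' / w + c π'`. -/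
noncomputable def pearsonPoly (a α β γ c : ℝ) : ℝ[X] :=
  C (α + c) * (X * (X - 1)) + C (β + c) * ((X - C a) * (X - 1)) + C (γ + c) * ((X - C a) * X)

/-- Pearson's equation: `(w π^c f)' = w π^(c-1) (pearsonOp a α β γ c f)`. -/
noncomputable def pearsonOp (a α β γ c : ℝ) (f : ℝ[X]) : ℝ[X] :=
  pearsonPoly a α β γ c * f + nodePoly a * derivative f

/-- `π^(n-m) * rodriguesFactor a α β γ n m = w⁻¹ (d/dx)^m (w πⁿ)`. -/
noncomputable def rodriguesFactor (a α β γ : ℝ) (n : ℕ) : ℕ → ℝ[X]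
  | 0 => 1
  | m + 1 => pearsonOp a α β γ (n - m) (rodriguesFactor a α β γ n m)

section Algebra

variable {a α β γ : ℝ}

lemma pearsonPoly_add (c d : ℝ) :
    pearsonPoly a α β γ (c + d) = pearsonPoly a α β γ c + C d * derivative (nodePoly a) := by
  simp only [pearsonPoly, nodePoly, derivative_mul, derivative_sub, derivative_X, derivative_C,
    derivative_one, C_add]
  ring

/-- For `k = 0` the junk value `k - 1 = 0` is harmless: it is multiplied by `C 0`. -/
lemma X_pow_mul_nodePoly_pow_mul_pearsonOp (k c : ℕ) (f : ℝ[X]) :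
    X ^ k * (nodePoly a ^ c * pearsonOp a α β γ (c + 1) f) =
      pearsonOp a α β γ 1 (X ^ k * (nodePoly a ^ c * f)) -
        C (k : ℝ) * (X ^ (k - 1) * (nodePoly a ^ (c + 1) * f)) := by
  rw [pearsonOp, pearsonOp, add_comm (c : ℝ), pearsonPoly_add]
  simp only [derivative_mul, derivative_pow]
  rcases k with _ | k <;> rcases c with _ | c <;> simp [pow_succ] <;> ring

lemma map_X_pow_mul_rodriguesFactor_eq_zero (L : ℝ[X] →ₗ[ℝ] ℝ)
    (hL : ∀ g, L (pearsonOp a α β γ 1 g) = 0) {n m : ℕ} (hm : m ≤ n) {k : ℕ} (hk : k < m) :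
    L (X ^ k * (nodePoly a ^ (n - m) * rodriguesFactor a α β γ n m)) = 0 := by
  induction m generalizing k with
  | zero => omega
  | succ m ih =>
    obtain ⟨c, hc⟩ : ∃ c, n - m = c + 1 := ⟨n - (m + 1), by omega⟩
    have hcast : (n : ℝ) - m = (c : ℝ) + 1 := by
      have : (n : ℝ) = c + 1 + m := by exact_mod_cast (by omega : n = c + 1 + m)
      linarith
    rw [rodriguesFactor, hcast, show n - (m + 1) = c by omega, X_pow_mul_nodePoly_pow_mul_pearsonOp,
      map_sub, hL, ← hc, C_mul', map_smul, zero_sub, neg_eq_zero]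
    rcases k with _ | k
    · simp
    · rw [ih (by omega) (by omega), smul_zero]

lemma nodePoly_eq (a : ℝ) : nodePoly a = X ^ 3 - C (1 + a) * X ^ 2 + C a * X ^ 1 := by
  simp only [nodePoly, C_add, C_1]
  ring

lemma pearsonPoly_eq (c : ℝ) : pearsonPoly a α β γ c =
    C (α + β + γ + 3 * c) * X ^ 2 - C (α + β + 2 * c + a * (β + γ + 2 * c)) * X ^ 1 +
      C (a * (β + c)) := by
  simp only [pearsonPoly, C_add, C_mul, C_ofNat]
  ring

lemma coeff_pearsonOp (c : ℝ) {f : ℝ[X]} {d : ℕ} (hf : f.natDegree ≤ d + 1) :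
    (pearsonOp a α β γ c f).coeff (d + 3) = (α + β + γ + 3 * c + (d + 1)) * f.coeff (d + 1) ∧
    (pearsonOp a α β γ c f).coeff (d + 2) = (α + β + γ + 3 * c + d) * f.coeff d -
      (α + β + 2 * c + a * (β + γ + 2 * c) + (d + 1) * (1 + a)) * f.coeff (d + 1) := by
  have h2 : f.coeff (d + 2) = 0 := coeff_eq_zero_of_natDegree_lt (by omega)
  have h3 : f.coeff (d + 3) = 0 := coeff_eq_zero_of_natDegree_lt (by omega)
  simp only [pearsonOp, pearsonPoly_eq, nodePoly_eq, add_mul, sub_mul, mul_assoc, coeff_add,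
    coeff_sub, coeff_C_mul, coeff_X_pow_mul', coeff_derivative]
  constructor
  · simp [h2, h3]
    ring
  · rcases d with _ | d <;> simp [h2] <;> ring

lemma natDegree_pearsonOp_le (c : ℝ) {f : ℝ[X]} {d : ℕ} (hf : f.natDegree ≤ d) :
    (pearsonOp a α β γ c f).natDegree ≤ d + 2 := by
  have hρ : (pearsonPoly a α β γ c).natDegree ≤ 2 := by rw [pearsonPoly_eq]; compute_degree
  have hπ : (nodePoly a).natDegree ≤ 3 := by rw [nodePoly_eq]; compute_degree
  refine natDegree_add_le_of_degree_le ((natDegree_mul_le_of_le hρ hf).trans (by omega)) ?_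
  rcases d with _ | d
  · rw [eq_C_of_natDegree_le_zero hf, derivative_C, mul_zero, natDegree_zero]
    omega
  · exact (natDegree_mul_le_of_le hπ
      ((natDegree_derivative_le f).trans (Nat.sub_le_sub_right hf 1))).trans (by omega)

lemma natDegree_rodriguesFactor_le (n m : ℕ) :
    (rodriguesFactor a α β γ n m).natDegree ≤ 2 * m := by
  induction m with
  | zero => simp [rodriguesFactor]
  | succ m ih => exact (natDegree_pearsonOp_le _ ih).trans (by omega)

lemma rodriguesFactor_coeff {n k : ℕ} (hk : k < n) (hK : (n : ℝ) - 1 < α + β + γ + 3 * n) :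
    (rodriguesFactor a α β γ n (k + 1)).coeff (2 * k + 2) ≠ 0 ∧
    (α + β + γ + 3 * n) * (rodriguesFactor a α β γ n (k + 1)).coeff (2 * k + 1) =
      -(k + 1) * (α + β + 2 * n + a * (β + γ + 2 * n)) *
        (rodriguesFactor a α β γ n (k + 1)).coeff (2 * k + 2) := by
  induction k with
  | zero =>
    have hn : (1 : ℝ) ≤ n := by exact_mod_cast hk
    simp only [rodriguesFactor, pearsonOp, derivative_one, mul_zero, add_zero, mul_one,
      pearsonPoly_eq, coeff_add, coeff_sub, coeff_C_mul, coeff_X_pow, coeff_C]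
    norm_num
    exact ⟨by linarith, by ring⟩
  | succ k ih =>
    obtain ⟨hlead, hsub⟩ := ih (by omega)
    have hdeg : (rodriguesFactor a α β γ n (k + 1)).natDegree ≤ 2 * k + 1 + 1 :=
      natDegree_rodriguesFactor_le n (k + 1)
    obtain ⟨h3, h2⟩ := coeff_pearsonOp (a := a) (α := α) (β := β) (γ := γ)
      ((n : ℝ) - (k + 1 : ℕ)) hdeg
    rw [rodriguesFactor, show 2 * (k + 1) + 2 = 2 * k + 1 + 3 by ring,
      show 2 * (k + 1) + 1 = 2 * k + 1 + 2 by ring, h3, h2]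
    have hkn : ((k + 2 : ℕ) : ℝ) ≤ n := by exact_mod_cast hk
    push_cast at hkn ⊢
    constructor
    · exact mul_ne_zero (by linarith) hlead
    · linear_combination (α + β + γ + 3 * n - k - 2) * hsub

end Algebra

section Weight

variable {a α β γ : ℝ}

lemma eval_nodePoly (x : ℝ) : (nodePoly a).eval x = (x - a) * x * (x - 1) := by
  simp [nodePoly]

lemma weight_pos {x : ℝ} (hx : (nodePoly a).eval x ≠ 0) : 0 < weight a α β γ x := by
  rw [eval_nodePoly, mul_ne_zero_iff, mul_ne_zero_iff] at hx
  unfold weight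
  have := abs_pos.2 hx.1.1
  have := abs_pos.2 hx.1.2
  have := abs_pos.2 hx.2
  positivity

lemma weight_eq_of_mem_Ioo {x : ℝ} (hx : x ∈ Ioo a 1) :
    weight a α β γ x = (x - a) ^ α * |x| ^ β * (1 - x) ^ γ := by
  rw [weight, abs_of_pos (sub_pos.2 hx.1), abs_sub_comm, abs_of_pos (sub_pos.2 hx.2)]

lemma integrableOn_weight_mul_eval_Ioo_left (ha : a < 0) (hα : -1 < α) (hβ : -1 < β)
    (g : ℝ[X]) : IntegrableOn (fun x => weight a α β γ x * g.eval x) (Ioo a 0) := by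
  have hφ : ContinuousOn (fun x => |x - 1| ^ γ * g.eval x) (Icc a 0) :=
    ((continuous_id.sub continuous_const).abs.continuousOn.rpow_const fun x hx =>
      Or.inl (abs_ne_zero.2 (sub_ne_zero.2 (by linarith [hx.2] : x ≠ 1)))).mul
      g.continuous.continuousOn
  simpa only [weight, sub_zero, mul_assoc] using integrableOn_Ioo_abs_sub_rpow_mul ha hα hβ hφ

lemma integrableOn_weight_mul_eval_Ioo_right (ha : a < 0) (hβ : -1 < β) (hγ : -1 < γ)
    (g : ℝ[X]) : IntegrableOn (fun x => weight a α β γ x * g.eval x) (Ioo 0 1) := by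
  have hφ : ContinuousOn (fun x => |x - a| ^ α * g.eval x) (Icc 0 1) :=
    ((continuous_id.sub continuous_const).abs.continuousOn.rpow_const fun x hx =>
      Or.inl (abs_ne_zero.2 (sub_ne_zero.2 (by linarith [hx.1] : x ≠ a)))).mul
      g.continuous.continuousOn
  simpa only [weight, sub_zero, mul_assoc, mul_left_comm] using
    integrableOn_Ioo_abs_sub_rpow_mul zero_lt_one hβ hγ hφ

lemma hasDerivAt_weight {x : ℝ} (hx : (nodePoly a).eval x ≠ 0) :
    HasDerivAt (weight a α β γ)
      (weight a α β γ x * (α / (x - a) + β / x + γ / (x - 1))) x := by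
  rw [eval_nodePoly, mul_ne_zero_iff, mul_ne_zero_iff] at hx
  have h0 : HasDerivAt (fun y => |y| ^ β) (β * |x| ^ β / x) x := by
    simpa using hasDerivAt_abs_sub_rpow (e := 0) (κ := β) hx.1.2
  refine (((hasDerivAt_abs_sub_rpow (κ := α) (sub_ne_zero.1 hx.1.1)).mul h0).mul
    (hasDerivAt_abs_sub_rpow (κ := γ) (sub_ne_zero.1 hx.2))).congr_deriv ?_
  obtain ⟨⟨hxa, hx0⟩, hx1⟩ := hx
  simp only [weight, Pi.mul_apply]
  field_simp

lemma hasDerivAt_weight_mul_nodePoly_mul {x : ℝ} (hx : (nodePoly a).eval x ≠ 0) (g : ℝ[X]) :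
    HasDerivAt (fun y => weight a α β γ y * (nodePoly a * g).eval y)
      (weight a α β γ x * (pearsonOp a α β γ 1 g).eval x) x := by
  refine ((hasDerivAt_weight hx).mul ((nodePoly a * g).hasDerivAt x)).congr_deriv ?_
  rw [eval_nodePoly, mul_ne_zero_iff, mul_ne_zero_iff] at hx
  obtain ⟨⟨hxa, hx0⟩, hx1⟩ := hx
  simp only [pearsonOp, pearsonPoly, nodePoly, derivative_mul, eval_add, eval_mul, eval_sub,
    eval_C, eval_X, eval_one, eval_zero, derivative_sub, derivative_X, derivative_C, derivative_one]
  field_simp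
  ring

lemma continuous_weight_mul_nodePoly_mul (hα : -1 < α) (hβ : -1 < β) (hγ : -1 < γ)
    (g : ℝ[X]) : Continuous fun y => weight a α β γ y * (nodePoly a * g).eval y := by
  have h : (fun y => weight a α β γ y * (nodePoly a * g).eval y) = fun y =>
      (|y - a| ^ α * (y - a)) * (|y| ^ β * y) * (|y - 1| ^ γ * (y - 1)) * g.eval y := by
    ext y
    simp only [weight, eval_mul, eval_nodePoly]
    ring
  rw [h]
  have hc := fun {κ : ℝ} (hκ : -1 < κ) => continuous_abs_rpow_mul_self hκ
  exact ((((hc hα).comp (continuous_id.sub continuous_const)).mul (hc hβ)).mul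
    ((hc hγ).comp (continuous_id.sub continuous_const))).mul g.continuous

theorem setIntegral_weight_mul_pearsonOp_eq_zero (hα : -1 < α) (hβ : -1 < β) (hγ : -1 < γ)
    {l u : ℝ} (hlu : l < u) (hl : (nodePoly a).IsRoot l) (hu : (nodePoly a).IsRoot u)
    (hI : ∀ x ∈ Ioo l u, (nodePoly a).eval x ≠ 0) {g : ℝ[X]}
    (hint : IntegrableOn (fun x => weight a α β γ x * (pearsonOp a α β γ 1 g).eval x) (Ioo l u)) :
    ∫ x in Ioo l u, weight a α β γ x * (pearsonOp a α β γ 1 g).eval x = 0 := by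
  rw [← integral_Ioc_eq_integral_Ioo, ← intervalIntegral.integral_of_le hlu.le,
    intervalIntegral.integral_eq_sub_of_hasDerivAt_of_le hlu.le
      (continuous_weight_mul_nodePoly_mul hα hβ hγ g).continuousOn
      (fun x hx => hasDerivAt_weight_mul_nodePoly_mul (hI x hx) g)
      ((intervalIntegrable_iff_integrableOn_Ioo_of_le hlu.le).2 hint)]
  simp [hl.eq_zero, hu.eq_zero]

lemma eval_nodePoly_ne_zero_of_mem_Ioo_left {x : ℝ} (hx : x ∈ Ioo a 0) :
    (nodePoly a).eval x ≠ 0 := by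
  rw [eval_nodePoly]
  exact mul_ne_zero (mul_ne_zero (sub_pos.2 hx.1).ne' hx.2.ne) (by linarith [hx.2])

lemma eval_nodePoly_ne_zero_of_mem_Ioo_right (ha : a < 0) {x : ℝ} (hx : x ∈ Ioo 0 1) :
    (nodePoly a).eval x ≠ 0 := by
  rw [eval_nodePoly]
  exact mul_ne_zero (mul_ne_zero (by linarith [hx.1]) hx.1.ne') (sub_neg.2 hx.2).ne

end Weight

def IsAngelescoOrthogonal (a α β γ : ℝ) (n : ℕ) (p : ℝ[X]) : Prop :=
  ∀ j < n, (∫ x in Ioo a 0, weight a α β γ x * (X ^ j * p).eval x) = 0 ∧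
    (∫ x in Ioo 0 1, weight a α β γ x * (X ^ j * p).eval x) = 0

section Orthogonality

variable {a α β γ : ℝ} {n : ℕ}

lemma setIntegral_weight_mul_X_pow_mul_rodriguesFactor_eq_zero (hα : -1 < α) (hβ : -1 < β)
    (hγ : -1 < γ) {l u : ℝ} (hlu : l < u) (hl : (nodePoly a).IsRoot l)
    (hu : (nodePoly a).IsRoot u) (hI : ∀ x ∈ Ioo l u, (nodePoly a).eval x ≠ 0)
    (hint : ∀ g : ℝ[X], IntegrableOn (fun x => weight a α β γ x * g.eval x) (Ioo l u))
    {j : ℕ} (hj : j < n) :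
    ∫ x in Ioo l u, weight a α β γ x * (X ^ j * rodriguesFactor a α β γ n n).eval x = 0 := by
  simpa only [Nat.sub_self, pow_zero, one_mul, weightedIntegral_apply] using
    map_X_pow_mul_rodriguesFactor_eq_zero (weightedIntegral _ _ hint)
      (fun g => setIntegral_weight_mul_pearsonOp_eq_zero hα hβ hγ hlu hl hu hI (hint _)) le_rfl hj

lemma isAngelescoOrthogonal_rodriguesFactor (ha : a < 0) (hα : -1 < α) (hβ : -1 < β)
    (hγ : -1 < γ) (n : ℕ) : IsAngelescoOrthogonal a α β γ n (rodriguesFactor a α β γ n n) :=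
  fun _ hj =>
    ⟨setIntegral_weight_mul_X_pow_mul_rodriguesFactor_eq_zero hα hβ hγ ha (by simp [nodePoly])
      (by simp [nodePoly]) (fun _ => eval_nodePoly_ne_zero_of_mem_Ioo_left)
      (integrableOn_weight_mul_eval_Ioo_left ha hα hβ) hj,
    setIntegral_weight_mul_X_pow_mul_rodriguesFactor_eq_zero hα hβ hγ zero_lt_one
      (by simp [nodePoly]) (by simp [nodePoly]) (fun _ => eval_nodePoly_ne_zero_of_mem_Ioo_right ha)
      (integrableOn_weight_mul_eval_Ioo_right ha hβ hγ) hj⟩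

lemma IsAngelescoOrthogonal.sub_C_mul (ha : a < 0) (hα : -1 < α) (hβ : -1 < β) (hγ : -1 < γ)
    {p q : ℝ[X]} (hp : IsAngelescoOrthogonal a α β γ n p)
    (hq : IsAngelescoOrthogonal a α β γ n q) (c : ℝ) :
    IsAngelescoOrthogonal a α β γ n (p - C c * q) := by
  have hsub : ∀ {s : Set ℝ}
      (hint : ∀ g : ℝ[X], IntegrableOn (fun x => weight a α β γ x * g.eval x) s) (j : ℕ),
      ∫ x in s, weight a α β γ x * (X ^ j * (p - C c * q)).eval x =
        (∫ x in s, weight a α β γ x * (X ^ j * p).eval x) -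
          c * ∫ x in s, weight a α β γ x * (X ^ j * q).eval x := fun hint j => by
    rw [mul_sub, mul_left_comm, C_mul']
    exact ((weightedIntegral _ _ hint).map_sub _ _).trans (by rw [map_smul, smul_eq_mul]; rfl)
  intro j hj
  rw [hsub (integrableOn_weight_mul_eval_Ioo_left ha hα hβ),
    hsub (integrableOn_weight_mul_eval_Ioo_right ha hβ hγ), (hp j hj).1, (hp j hj).2,
    (hq j hj).1, (hq j hj).2]
  simp

lemma IsAngelescoOrthogonal.eq_zero (ha : a < 0) (hα : -1 < α) (hβ : -1 < β) (hγ : -1 < γ)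
    {p : ℝ[X]} (hp : IsAngelescoOrthogonal a α β γ n p) (hdeg : p.natDegree < 2 * n) : p = 0 :=
  eq_zero_of_orthogonal_on_two_intervals ha le_rfl zero_lt_one
    (fun x hx => weight_pos (eval_nodePoly_ne_zero_of_mem_Ioo_left hx))
    (fun x hx => weight_pos (eval_nodePoly_ne_zero_of_mem_Ioo_right ha hx))
    (integrableOn_weight_mul_eval_Ioo_left ha hα hβ)
    (integrableOn_weight_mul_eval_Ioo_right ha hβ hγ) (by omega : p.natDegree < n + n)
    (fun j hj => (hp j hj).1) (fun j hj => (hp j hj).2)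

lemma isAngelescoOrthogonal_of_integral_eq_zero (ha : a < 0) {P : ℝ[X]}
    (h₁ : ∀ k < n, ∫ x in Ioo a 0, P.eval x * ((x - a) ^ α * |x| ^ β * (1 - x) ^ γ) * x ^ k = 0)
    (h₂ : ∀ k < n, ∫ x in Ioo 0 1, P.eval x * ((x - a) ^ α * x ^ β * (1 - x) ^ γ) * x ^ k = 0) :
    IsAngelescoOrthogonal a α β γ n P := by
  refine fun j hj => ⟨(setIntegral_congr_fun measurableSet_Ioo fun x hx => ?_).trans (h₁ j hj),
    (setIntegral_congr_fun measurableSet_Ioo fun x hx => ?_).trans (h₂ j hj)⟩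
  · simp only [weight_eq_of_mem_Ioo ⟨hx.1, by linarith [hx.2]⟩, eval_mul, eval_pow, eval_X]
    ring
  · simp only [weight_eq_of_mem_Ioo ⟨ha.trans hx.1, hx.2⟩, abs_of_pos hx.1, eval_mul, eval_pow,
      eval_X]
    ring

end Orthogonality

end JacobiAngelesco

open JacobiAngelesco

/-- **Subleading coefficient of the diagonal Jacobi-Angelesco polynomial** `P_{n,n}`:
the coefficient of `x^{2n-1}` equals `-n[α+β+2n + a(β+γ+2n)]/(α+β+γ+3n)`. -/
theorem stmt_15 (a : ℝ) (ha : a < 0) (α β γ : ℝ)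
    (hα : -1 < α) (hβ : -1 < β) (hγ : -1 < γ) (n : ℕ) (hn : 1 ≤ n)
    (P : Polynomial ℝ)
    (hPm : P.Monic) (hPdeg : P.natDegree = 2 * n)
    (hPorth1 : ∀ k < n,
      ∫ x in Set.Ioo a 0,
        P.eval x * ((x - a) ^ α * |x| ^ β * (1 - x) ^ γ) * x ^ k = 0)
    (hPorth2 : ∀ k < n,
      ∫ x in Set.Ioo (0:ℝ) 1,
        P.eval x * ((x - a) ^ α * x ^ β * (1 - x) ^ γ) * x ^ k = 0) :
    P.coeff (2 * n - 1) =
      -(n : ℝ) * (α + β + 2 * n + a * (β + γ + 2 * n)) / (α + β + γ + 3 * n) := by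
  obtain ⟨k, rfl⟩ : ∃ k, n = k + 1 := ⟨n - 1, by omega⟩
  set Q := rodriguesFactor a α β γ (k + 1) (k + 1)
  obtain ⟨hlead, hsub⟩ := rodriguesFactor_coeff (a := a) (α := α) (β := β) (γ := γ)
    (lt_add_one k) (by push_cast; linarith)
  obtain ⟨c, hc⟩ : ∃ c : ℝ, c * Q.coeff (2 * k + 2) = 1 := ⟨_, inv_mul_cancel₀ hlead⟩
  have hPQ : P = C c * Q := by
    refine sub_eq_zero.1 (IsAngelescoOrthogonal.eq_zero ha hα hβ hγ
      ((isAngelescoOrthogonal_of_integral_eq_zero ha hPorth1 hPorth2).sub_C_mul ha hα hβ hγ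
        (isAngelescoOrthogonal_rodriguesFactor ha hα hβ hγ _) c) ?_)
    exact (natDegree_sub_C_mul_lt (by omega) hPm (hPdeg.trans (by ring))
      ((natDegree_rodriguesFactor_le _ _).trans_eq (by ring)) hc).trans_eq (by ring)
  have hK : α + β + γ + 3 * ((k + 1 : ℕ) : ℝ) ≠ 0 := by
    have := k.cast_nonneg (α := ℝ)
    push_cast
    linarith
  rw [show 2 * (k + 1) - 1 = 2 * k + 1 by omega, hPQ, coeff_C_mul, eq_div_iff hK, mul_right_comm,
    mul_assoc, hsub]
  push_cast
  linear_combination (-((k : ℝ) + 1) * (α + β + 2 * (k + 1) + a * (β + γ + 2 * (k + 1)))) * hc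
end

section
/- Let a < 0 and α, β, γ > −1, and for each nonnegative integer n define X_n = ( ∫_a^0 x (x−a)^{α+n} |x|^{β+n} (1−x)^{γ+n} dx ) / ( ∫_a^0 (x−a)^{α+n} |x|^{β+n} (1−x)^{γ+n} dx ). Then lim_{n→∞} X_n = x_1, where x_1 = ( (a+1) − √(a² − a + 1) ) / 3 is the unique zero in [a,0] of the derivative of g(x) = (x−a) x (1−x). -/
/-!
Write the weight as `w x * f x ^ n` with `w x = (x-a)^α |x|^β (1-x)^γ` and
`f x = (x-a) |x| (1-x)`. This is Laplace's method: the measures `w fⁿ dx` concentrate at the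
unique maximiser of `f` on `[a,0]`, since the mass of a region where `f ≤ M` is at most
`Mⁿ ∫ w`, while a neighbourhood of the maximiser where `f ≥ m > M` carries mass at least
`mⁿ c` with `c > 0`. On `[a,0]` we have `f = -g`, and the Taylor expansion at the critical
point, `f x₁ - f x = (x - x₁)² ((a + 1 + 2√(a²-a+1))/3 - x)`, shows that `x₁` is the strict
maximiser.
-/

open Filter Set Topology MeasureTheory

section Concentration

variable {α : Type*} [MeasurableSpace α] {μ : Measure α}

theorem abs_integral_mul_div_integral_sub_le {ρ g : α → ℝ} {C : Set α} {L K ε : ℝ} (hε : 0 ≤ ε)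
    (hρ : Integrable ρ μ) (hρ0 : 0 ≤ᵐ[μ] ρ) (hρpos : 0 < ∫ x, ρ x ∂μ)
    (hg : AEStronglyMeasurable g μ) (hgK : ∀ᵐ x ∂μ, |g x - L| ≤ K) (hC : MeasurableSet C)
    (hgε : ∀ᵐ x ∂μ, x ∉ C → |g x - L| ≤ ε) :
    |(∫ x, g x * ρ x ∂μ) / (∫ x, ρ x ∂μ) - L| ≤
      ε + K * ((∫ x in C, ρ x ∂μ) / ∫ x, ρ x ∂μ) := by
  have hdev : Integrable (fun x => (g x - L) * ρ x) μ :=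
    hρ.bdd_mul (hg.sub aestronglyMeasurable_const) (by simpa only [Real.norm_eq_abs] using hgK)
  have hgρ : Integrable (fun x => g x * ρ x) μ :=
    (hdev.add (hρ.const_mul L)).congr (ae_of_all _ fun x => by simp only [Pi.add_apply]; ring)
  have hsplit : (∫ x, g x * ρ x ∂μ) / (∫ x, ρ x ∂μ) - L =
      (∫ x, (g x - L) * ρ x ∂μ) / ∫ x, ρ x ∂μ := by
    simp_rw [sub_mul]
    rw [integral_sub hgρ (hρ.const_mul L), integral_const_mul]
    field_simp
  have hpointwise : ∀ᵐ x ∂μ, |(g x - L) * ρ x| ≤ ε * ρ x + K * C.indicator ρ x := by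
    filter_upwards [hρ0, hgK, hgε] with x (hρx : 0 ≤ ρ x) hKx hεx
    rw [abs_mul, abs_of_nonneg hρx]
    by_cases hx : x ∈ C
    · rw [indicator_of_mem hx]
      nlinarith [mul_le_mul_of_nonneg_right hKx hρx]
    · rw [indicator_of_notMem hx]
      nlinarith [mul_le_mul_of_nonneg_right (hεx hx) hρx]
  have hbound : |∫ x, (g x - L) * ρ x ∂μ| ≤ ε * (∫ x, ρ x ∂μ) + K * ∫ x in C, ρ x ∂μ := by
    calc |∫ x, (g x - L) * ρ x ∂μ| ≤ ∫ x, |(g x - L) * ρ x| ∂μ := abs_integral_le_integral_abs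
      _ ≤ ∫ x, (ε * ρ x + K * C.indicator ρ x) ∂μ :=
        integral_mono_ae hdev.abs
          ((hρ.const_mul ε).add ((hρ.indicator hC).const_mul K)) hpointwise
      _ = ε * (∫ x, ρ x ∂μ) + K * ∫ x in C, ρ x ∂μ := by
        rw [integral_add (hρ.const_mul ε) ((hρ.indicator hC).const_mul K),
          integral_const_mul, integral_const_mul, integral_indicator hC]
  rw [hsplit, abs_div, abs_of_pos hρpos, div_le_iff₀ hρpos]
  calc _ ≤ ε * (∫ x, ρ x ∂μ) + K * ∫ x in C, ρ x ∂μ := hbound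
    _ = _ := by field_simp

theorem tendsto_integral_mul_div_integral {ρ : ℕ → α → ℝ} {g : α → ℝ} {L K : ℝ}
    (hρ : ∀ n, Integrable (ρ n) μ) (hρ0 : ∀ n, 0 ≤ᵐ[μ] ρ n) (hρpos : ∀ n, 0 < ∫ x, ρ n x ∂μ)
    (hg : AEStronglyMeasurable g μ) (hgK : ∀ᵐ x ∂μ, |g x - L| ≤ K)
    (hconc : ∀ ε > 0, ∃ C, MeasurableSet C ∧ (∀ᵐ x ∂μ, x ∉ C → |g x - L| ≤ ε) ∧
      Tendsto (fun n => (∫ x in C, ρ n x ∂μ) / ∫ x, ρ n x ∂μ) atTop (𝓝 0)) :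
    Tendsto (fun n => (∫ x, g x * ρ n x ∂μ) / ∫ x, ρ n x ∂μ) atTop (𝓝 L) := by
  refine Metric.tendsto_nhds.2 fun ε hε => ?_
  obtain ⟨C, hC, hgC, hmass⟩ := hconc (ε / 2) (half_pos hε)
  have hlim : Tendsto (fun n => ε / 2 + K * ((∫ x in C, ρ n x ∂μ) / ∫ x, ρ n x ∂μ)) atTop
      (𝓝 (ε / 2 + K * 0)) := (hmass.const_mul K).const_add _
  filter_upwards [hlim.eventually (gt_mem_nhds (show ε / 2 + K * 0 < ε by linarith))] with n hn
  exact (abs_integral_mul_div_integral_sub_le (half_pos hε).le (hρ n) (hρ0 n) (hρpos n) hg hgK hC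
    hgC).trans_lt hn

variable {w f : α → ℝ}

theorem mul_setIntegral_le_integral_mul_pow {B : Set α} {m : ℝ} (n : ℕ)
    (hw : Integrable w μ) (hw0 : 0 ≤ᵐ[μ] w) (hf0 : 0 ≤ᵐ[μ] f)
    (hint : Integrable (fun x => w x * f x ^ n) μ) (hB : MeasurableSet B) (hm : 0 ≤ m)
    (hfB : ∀ᵐ x ∂μ, x ∈ B → m ≤ f x) :
    m ^ n * ∫ x in B, w x ∂μ ≤ ∫ x, w x * f x ^ n ∂μ := by
  rw [← integral_const_mul]
  calc ∫ x in B, m ^ n * w x ∂μ ≤ ∫ x in B, w x * f x ^ n ∂μ := by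
        refine setIntegral_mono_on_ae (hw.const_mul _).integrableOn hint.integrableOn hB ?_
        filter_upwards [hw0, hfB] with x (hwx : 0 ≤ w x) hfx hxB
        rw [mul_comm]
        exact mul_le_mul_of_nonneg_left (pow_le_pow_left₀ hm (hfx hxB) n) hwx
    _ ≤ ∫ x, w x * f x ^ n ∂μ := by
        refine setIntegral_le_integral hint ?_
        filter_upwards [hw0, hf0] with x (hwx : 0 ≤ w x) (hfx : 0 ≤ f x)
        positivity

theorem setIntegral_mul_pow_le {C : Set α} {M : ℝ} (n : ℕ) (hM : 0 ≤ M)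
    (hw : Integrable w μ) (hw0 : 0 ≤ᵐ[μ] w) (hf0 : 0 ≤ᵐ[μ] f)
    (hint : Integrable (fun x => w x * f x ^ n) μ) (hC : MeasurableSet C)
    (hfC : ∀ᵐ x ∂μ, x ∈ C → f x ≤ M) :
    ∫ x in C, w x * f x ^ n ∂μ ≤ M ^ n * ∫ x, w x ∂μ := by
  rw [← integral_const_mul]
  calc ∫ x in C, w x * f x ^ n ∂μ ≤ ∫ x in C, M ^ n * w x ∂μ := by
        refine setIntegral_mono_on_ae hint.integrableOn (hw.const_mul _).integrableOn hC ?_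
        filter_upwards [hw0, hf0, hfC] with x (hwx : 0 ≤ w x) (hfx : 0 ≤ f x) hfCx hxC
        rw [mul_comm]
        exact mul_le_mul_of_nonneg_right (pow_le_pow_left₀ hfx (hfCx hxC) n) hwx
    _ ≤ ∫ x, M ^ n * w x ∂μ := by
        refine setIntegral_le_integral (hw.const_mul _) ?_
        filter_upwards [hw0] with x (hwx : 0 ≤ w x)
        positivity

theorem integral_mul_pow_pos {B : Set α} {m : ℝ} (n : ℕ)
    (hw : Integrable w μ) (hw0 : 0 ≤ᵐ[μ] w) (hf0 : 0 ≤ᵐ[μ] f)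
    (hint : Integrable (fun x => w x * f x ^ n) μ) (hB : MeasurableSet B)
    (hwB : 0 < ∫ x in B, w x ∂μ) (hm : 0 < m) (hfB : ∀ᵐ x ∂μ, x ∈ B → m ≤ f x) :
    0 < ∫ x, w x * f x ^ n ∂μ :=
  (mul_pos (pow_pos hm n) hwB).trans_le
    (mul_setIntegral_le_integral_mul_pow n hw hw0 hf0 hint hB hm.le hfB)

theorem tendsto_setIntegral_mul_pow_div_integral_mul_pow {B C : Set α} {m M : ℝ}
    (hw : Integrable w μ) (hw0 : 0 ≤ᵐ[μ] w) (hf0 : 0 ≤ᵐ[μ] f)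
    (hint : ∀ n : ℕ, Integrable (fun x => w x * f x ^ n) μ)
    (hB : MeasurableSet B) (hwB : 0 < ∫ x in B, w x ∂μ) (hfB : ∀ᵐ x ∂μ, x ∈ B → m ≤ f x)
    (hC : MeasurableSet C) (hfC : ∀ᵐ x ∂μ, x ∈ C → f x ≤ M) (hM : 0 ≤ M) (hMm : M < m) :
    Tendsto (fun n : ℕ => (∫ x in C, w x * f x ^ n ∂μ) / ∫ x, w x * f x ^ n ∂μ) atTop
      (𝓝 0) := by
  have hm : 0 < m := hM.trans_lt hMm
  have hpos n := integral_mul_pow_pos n hw hw0 hf0 (hint n) hB hwB hm hfB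
  set D := (∫ x, w x ∂μ) / ∫ x in B, w x ∂μ
  have hD : 0 ≤ D := div_nonneg (integral_nonneg_of_ae hw0) hwB.le
  have hbound n : (∫ x in C, w x * f x ^ n ∂μ) / (∫ x, w x * f x ^ n ∂μ) ≤ D * (M / m) ^ n := by
    rw [div_le_iff₀ (hpos n)]
    calc ∫ x in C, w x * f x ^ n ∂μ ≤ M ^ n * ∫ x, w x ∂μ :=
          setIntegral_mul_pow_le n hM hw hw0 hf0 (hint n) hC hfC
      _ = D * (M / m) ^ n * (m ^ n * ∫ x in B, w x ∂μ) := by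
          simp only [D, div_pow]; field_simp
      _ ≤ D * (M / m) ^ n * ∫ x, w x * f x ^ n ∂μ := by
          gcongr
          exact mul_setIntegral_le_integral_mul_pow n hw hw0 hf0 (hint n) hB hm.le hfB
  have hgeom : Tendsto (fun n : ℕ => D * (M / m) ^ n) atTop (𝓝 0) := by
    simpa using (tendsto_pow_atTop_nhds_zero_of_lt_one (div_nonneg hM hm.le)
      ((div_lt_one hm).2 hMm)).const_mul D
  refine squeeze_zero (fun n => div_nonneg ?_ (hpos n).le) hbound hgeom
  refine integral_nonneg_of_ae (ae_restrict_of_ae ?_)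
  filter_upwards [hw0, hf0] with x (hwx : 0 ≤ w x) (hfx : 0 ≤ f x)
  positivity

end Concentration

theorem IsCompact.exists_lt_forall_le_of_le_dist {X : Type*} [PseudoMetricSpace X] {s : Set X}
    {f : X → ℝ} {x₀ : X} {δ : ℝ} (hs : IsCompact s) (hf : ContinuousOn f s) (hδ : 0 < δ)
    (hpos : 0 < f x₀) (hmax : ∀ x ∈ s, x ≠ x₀ → f x < f x₀) :
    ∃ M, 0 ≤ M ∧ M < f x₀ ∧ ∀ x ∈ s, δ ≤ dist x x₀ → f x ≤ M := by
  set t := s ∩ {x | δ ≤ dist x x₀}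
  have ht : IsCompact t := hs.inter_right (isClosed_le continuous_const (by fun_prop))
  rcases t.eq_empty_or_nonempty with hempty | hne
  · refine ⟨0, le_rfl, hpos, fun x hx hδx => ?_⟩
    exact absurd (hempty ▸ (⟨hx, hδx⟩ : x ∈ t)) (notMem_empty x)
  obtain ⟨z, ⟨hzs, hzδ⟩, hzmax⟩ := ht.exists_isMaxOn hne (hf.mono inter_subset_left)
  have hz : z ≠ x₀ := fun h => by simp only [mem_ofPred_eq, h, dist_self] at hzδ; linarith
  exact ⟨max (f z) 0, le_max_right _ _, max_lt (hmax z hzs hz) hpos,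
    fun x hx hδx => (hzmax ⟨hx, hδx⟩).trans (le_max_left _ _)⟩

theorem setIntegral_Ioo_pos_of_pos {c d : ℝ} {w : ℝ → ℝ} (hcd : c < d)
    (hw : IntegrableOn w (Ioo c d)) (hw0 : ∀ x ∈ Ioo c d, 0 < w x) : 0 < ∫ x in Ioo c d, w x := by
  rw [← integral_Ioc_eq_integral_Ioo, ← intervalIntegral.integral_of_le hcd.le]
  exact intervalIntegral.intervalIntegral_pos_of_pos_on
    ((intervalIntegrable_iff_integrableOn_Ioo_of_le hcd.le).2 hw) hw0 hcd

theorem exists_measurableSet_setIntegral_pos_forall_le {a b x₀ m : ℝ} {w f : ℝ → ℝ}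
    (hab : a < b) (hw : IntegrableOn w (Ioo a b)) (hw0 : ∀ x ∈ Ioo a b, 0 < w x)
    (hf : ContinuousWithinAt f (Icc a b) x₀) (hx₀ : x₀ ∈ Icc a b) (hm : m < f x₀) :
    ∃ B, MeasurableSet B ∧ 0 < ∫ x in B, w x ∂(volume.restrict (Ioo a b)) ∧
      ∀ᵐ x ∂(volume.restrict (Ioo a b)), x ∈ B → m ≤ f x := by
  obtain ⟨r, hr, hfr⟩ := Metric.continuousWithinAt_iff.1 hf _ (sub_pos.2 hm)
  refine ⟨Ioo (x₀ - r) (x₀ + r), measurableSet_Ioo, ?_, ?_⟩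
  · have hsub : Ioo ((x₀ - r) ⊔ a) ((x₀ + r) ⊓ b) ⊆ Ioo a b :=
      Ioo_subset_Ioo le_sup_right inf_le_right
    rw [Measure.restrict_restrict measurableSet_Ioo, Ioo_inter_Ioo]
    refine setIntegral_Ioo_pos_of_pos ?_ (hw.mono_set hsub) fun x hx => hw0 x (hsub hx)
    simp only [sup_lt_iff, lt_inf_iff]
    refine ⟨⟨?_, ?_⟩, ?_, ?_⟩ <;> linarith [hx₀.1, hx₀.2]
  · filter_upwards [ae_restrict_mem measurableSet_Ioo] with x hx hxB
    have hclose := hfr (Ioo_subset_Icc_self hx)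
      (by rw [Real.dist_eq, abs_sub_lt_iff]; constructor <;> linarith [hxB.1, hxB.2])
    rw [Real.dist_eq, abs_sub_lt_iff] at hclose
    linarith

theorem tendsto_setIntegral_mul_mul_pow_div_setIntegral_mul_pow {a b x₀ : ℝ} {w f : ℝ → ℝ}
    (hab : a < b) (hw : IntegrableOn w (Ioo a b)) (hw0 : ∀ x ∈ Ioo a b, 0 < w x)
    (hf : ContinuousOn f (Icc a b)) (hf0 : ∀ x ∈ Icc a b, 0 ≤ f x) (hx₀ : x₀ ∈ Icc a b)
    (hmax : ∀ x ∈ Icc a b, x ≠ x₀ → f x < f x₀) :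
    Tendsto (fun n : ℕ => (∫ x in Ioo a b, x * (w x * f x ^ n)) /
      ∫ x in Ioo a b, w x * f x ^ n) atTop (𝓝 x₀) := by
  set μ := volume.restrict (Ioo a b)
  have hIcc : ∀ᵐ x ∂μ, x ∈ Icc a b :=
    (ae_restrict_mem measurableSet_Ioo).mono fun x hx => Ioo_subset_Icc_self hx
  have hw0' : 0 ≤ᵐ[μ] w := (ae_restrict_mem measurableSet_Ioo).mono fun x hx => (hw0 x hx).le
  have hf0' : 0 ≤ᵐ[μ] f := hIcc.mono hf0
  obtain ⟨K, hK⟩ := isCompact_Icc.exists_bound_of_continuousOn hf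
  have hint (n : ℕ) : Integrable (fun x => w x * f x ^ n) μ :=
    hw.mul_bdd (((hf.mono Ioo_subset_Icc_self).aestronglyMeasurable measurableSet_Ioo).pow n)
      (hIcc.mono fun x hx => by
        rw [norm_pow]; exact pow_le_pow_left₀ (norm_nonneg _) (hK x hx) n)
  have hfx₀ : 0 < f x₀ := by
    obtain ⟨y, hy, hyx₀⟩ : ∃ y ∈ Icc a b, y ≠ x₀ := by
      rcases eq_or_ne a x₀ with h | h
      · exact ⟨b, right_mem_Icc.2 hab.le, h ▸ hab.ne'⟩
      · exact ⟨a, left_mem_Icc.2 hab.le, h⟩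
    exact (hf0 y hy).trans_lt (hmax y hy hyx₀)
  have hneigh (m : ℝ) (hm : m < f x₀) :=
    exists_measurableSet_setIntegral_pos_forall_le hab hw hw0 (hf x₀ hx₀) hx₀ hm
  obtain ⟨B₀, hB₀, hwB₀, hfB₀⟩ := hneigh (f x₀ / 2) (half_lt_self hfx₀)
  refine tendsto_integral_mul_div_integral (ρ := fun n x => w x * f x ^ n) (g := fun x => x)
    (K := b - a) hint (fun n => ?_)
    (fun n => integral_mul_pow_pos n hw hw0' hf0' (hint n) hB₀ hwB₀ (half_pos hfx₀) hfB₀)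
    measurable_id.aestronglyMeasurable ?_ fun ε hε => ?_
  · filter_upwards [hw0', hf0'] with x (hwx : 0 ≤ w x) (hfx : 0 ≤ f x)
    positivity
  · filter_upwards [hIcc] with x hx
    rw [abs_le]
    constructor <;> linarith [hx.1, hx.2, hx₀.1, hx₀.2]
  obtain ⟨M, hM0, hMx₀, hfM⟩ := isCompact_Icc.exists_lt_forall_le_of_le_dist hf hε hfx₀ hmax
  obtain ⟨B, hB, hwB, hfB⟩ := hneigh ((M + f x₀) / 2) (by linarith)
  refine ⟨{x | ε ≤ |x - x₀|}, measurableSet_le measurable_const (by fun_prop),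
    ae_of_all _ fun x hx => (not_le.1 hx).le,
    tendsto_setIntegral_mul_pow_div_integral_mul_pow hw hw0' hf0' hint hB hwB hfB
      (measurableSet_le measurable_const (by fun_prop)) ?_ hM0 (by linarith)⟩
  filter_upwards [hIcc] with x hx hxC
  exact hfM x hx (by rwa [Real.dist_eq])

theorem intervalIntegrable_rpow_sub_mul_rpow_sub_mul {a b α β : ℝ} {h : ℝ → ℝ} (hab : a < b)
    (hα : -1 < α) (hβ : -1 < β) (hh : ContinuousOn h (Icc a b)) :
    IntervalIntegrable (fun x => (x - a) ^ α * (b - x) ^ β * h x) volume a b := by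
  set c := (a + b) / 2
  have hac : a < c := by simp only [c]; linarith
  have hcb : c < b := by simp only [c]; linarith
  have hleft : IntervalIntegrable (fun x => (x - a) ^ α * ((b - x) ^ β * h x)) volume a c := by
    have hsing : IntervalIntegrable (fun x => (x - a) ^ α) volume a c := by
      simpa using
        (intervalIntegral.intervalIntegrable_rpow' hα (a := 0) (b := c - a)).comp_sub_right a
    refine hsing.mul_continuousOn (ContinuousOn.mul ?_ (hh.mono ?_))
    · refine ContinuousOn.rpow_const (by fun_prop) fun x hx => Or.inl ?_
      rw [uIcc_of_le hac.le] at hx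
      linarith [hx.2]
    · rw [uIcc_of_le hac.le]; exact Icc_subset_Icc_right hcb.le
  have hright : IntervalIntegrable (fun x => (b - x) ^ β * ((x - a) ^ α * h x)) volume c b := by
    have hsing : IntervalIntegrable (fun x => (b - x) ^ β) volume c b := by
      simpa using
        ((intervalIntegral.intervalIntegrable_rpow' hβ (a := 0) (b := b - c)).comp_sub_left b).symm
    refine hsing.mul_continuousOn (ContinuousOn.mul ?_ (hh.mono ?_))
    · refine ContinuousOn.rpow_const (by fun_prop) fun x hx => Or.inl ?_
      rw [uIcc_of_le hcb.le] at hx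
      linarith [hx.1]
    · rw [uIcc_of_le hcb.le]; exact Icc_subset_Icc_left hac.le
  exact (hleft.congr fun x _ => by ring).trans (hright.congr fun x _ => by ring)

theorem abs_add_one_lt_sqrt {a : ℝ} (ha : a < 0) : |a + 1| < √(a ^ 2 - a + 1) :=
  Real.lt_sqrt_of_sq_lt (by rw [sq_abs]; linarith)

theorem sub_sqrt_div_three_mem_Ioo {a : ℝ} (ha : a < 0) :
    ((a + 1) - √(a ^ 2 - a + 1)) / 3 ∈ Ioo a 0 := by
  have hs := (abs_lt.1 (abs_add_one_lt_sqrt ha)).2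
  have hs' : √(a ^ 2 - a + 1) < 1 - 2 * a := (Real.sqrt_lt' (by linarith)).2 (by nlinarith)
  constructor <;> linarith

theorem deriv_sub_mul_mul_one_sub_sub_sqrt_div_three (a : ℝ) :
    deriv (fun x : ℝ => (x - a) * x * (1 - x)) (((a + 1) - √(a ^ 2 - a + 1)) / 3) = 0 := by
  set x₁ := ((a + 1) - √(a ^ 2 - a + 1)) / 3
  have hs2 : √(a ^ 2 - a + 1) ^ 2 = a ^ 2 - a + 1 :=
    Real.sq_sqrt (by nlinarith [sq_nonneg (a - 1)])
  have hderiv : HasDerivAt (fun x : ℝ => (x - a) * x * (1 - x))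
      (-3 * x₁ ^ 2 + 2 * (1 + a) * x₁ - a) x₁ := by
    refine ((((hasDerivAt_id' x₁).sub_const a).fun_mul (hasDerivAt_id' x₁)).fun_mul
      ((hasDerivAt_id' x₁).const_sub 1)).congr_deriv ?_
    ring
  rw [hderiv.deriv]
  simp only [x₁]
  linear_combination (-1 / 3 : ℝ) * hs2

theorem sub_mul_abs_mul_one_sub_lt {a x : ℝ} (ha : a < 0) (hx : x ≤ 0)
    (hx₁ : x ≠ ((a + 1) - √(a ^ 2 - a + 1)) / 3) :
    (x - a) * |x| * (1 - x) <
      (((a + 1) - √(a ^ 2 - a + 1)) / 3 - a) * |((a + 1) - √(a ^ 2 - a + 1)) / 3| *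
        (1 - ((a + 1) - √(a ^ 2 - a + 1)) / 3) := by
  have hx₁0 := (sub_sqrt_div_three_mem_Ioo ha).2
  have hs := (abs_lt.1 (abs_add_one_lt_sqrt ha)).1
  have hs0 := Real.sqrt_nonneg (a ^ 2 - a + 1)
  set s := √(a ^ 2 - a + 1)
  have hs2 : s ^ 2 = a ^ 2 - a + 1 := Real.sq_sqrt (by nlinarith)
  rw [abs_of_nonpos hx, abs_of_neg hx₁0]
  set x₁ := ((a + 1) - s) / 3
  have hgap : (x₁ - a) * -x₁ * (1 - x₁) - (x - a) * -x * (1 - x) =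
      (x - x₁) ^ 2 * ((a + 1 + 2 * s) / 3 - x) := by
    simp only [x₁]
    linear_combination ((a + 1) / 9 - s / 9 - x / 3) * hs2
  have : 0 < (x - x₁) ^ 2 * ((a + 1 + 2 * s) / 3 - x) :=
    mul_pos (pow_pos (abs_pos.2 (sub_ne_zero.2 hx₁)) 2 |>.trans_eq (sq_abs _)) (by linarith)
  linarith

theorem sub_rpow_mul_abs_rpow_mul_one_sub_rpow_add_natCast {a x α β γ : ℝ} (hx : x ∈ Ioo a 0)
    (n : ℕ) :
    (x - a) ^ (α + n) * |x| ^ (β + n) * (1 - x) ^ (γ + n) =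
      (x - a) ^ α * |x| ^ β * (1 - x) ^ γ * ((x - a) * |x| * (1 - x)) ^ n := by
  have hxa : 0 < x - a := sub_pos.2 hx.1
  have hx0 : 0 < |x| := abs_pos.2 hx.2.ne
  have hx1 : 0 < 1 - x := by linarith [hx.2]
  rw [Real.rpow_add hxa, Real.rpow_add hx0, Real.rpow_add hx1, Real.rpow_natCast,
    Real.rpow_natCast, Real.rpow_natCast, mul_pow, mul_pow]
  ring

theorem stmt_17_general (a : ℝ) (ha : a < 0) (α β γ : ℝ)
    (hα : -1 < α) (hβ : -1 < β)
    (X : ℕ → ℝ)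
    (hX : ∀ n : ℕ, X n =
      (∫ x in Set.Ioo a 0, x * ((x - a) ^ (α + n) * |x| ^ (β + n) * (1 - x) ^ (γ + n))) /
      (∫ x in Set.Ioo a 0, (x - a) ^ (α + n) * |x| ^ (β + n) * (1 - x) ^ (γ + n))) :
    (((a + 1) - Real.sqrt (a ^ 2 - a + 1)) / 3 ∈ Set.Icc a 0) ∧
    (deriv (fun x : ℝ => (x - a) * x * (1 - x))
        (((a + 1) - Real.sqrt (a ^ 2 - a + 1)) / 3) = 0) ∧
    Filter.Tendsto X Filter.atTop
      (nhds (((a + 1) - Real.sqrt (a ^ 2 - a + 1)) / 3)) := by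
  have hx₁ := sub_sqrt_div_three_mem_Ioo ha
  refine ⟨Ioo_subset_Icc_self hx₁, deriv_sub_mul_mul_one_sub_sub_sqrt_div_three a, ?_⟩
  have hw_pos (x : ℝ) (hx : x ∈ Ioo a 0) : 0 < (x - a) ^ α * |x| ^ β * (1 - x) ^ γ :=
    mul_pos (mul_pos (Real.rpow_pos_of_pos (sub_pos.2 hx.1) _)
      (Real.rpow_pos_of_pos (abs_pos.2 hx.2.ne) _)) (Real.rpow_pos_of_pos (by linarith [hx.2]) _)
  have hf_nonneg (x : ℝ) (hx : x ∈ Icc a 0) : 0 ≤ (x - a) * |x| * (1 - x) :=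
    mul_nonneg (mul_nonneg (sub_nonneg.2 hx.1) (abs_nonneg x)) (by linarith [hx.2])
  have hw : IntegrableOn (fun x => (x - a) ^ α * |x| ^ β * (1 - x) ^ γ) (Ioo a 0) := by
    refine ((intervalIntegrable_iff_integrableOn_Ioo_of_le ha.le).1
      (intervalIntegrable_rpow_sub_mul_rpow_sub_mul ha hα hβ (h := fun x => (1 - x) ^ γ)
        ?_)).congr_fun (fun x hx => ?_) measurableSet_Ioo
    · exact ContinuousOn.rpow_const (by fun_prop) fun x hx => Or.inl (by linarith [hx.2])
    · simp only [zero_sub, abs_of_neg hx.2]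
  have hlim := tendsto_setIntegral_mul_mul_pow_div_setIntegral_mul_pow ha hw hw_pos
    (by fun_prop) hf_nonneg (Ioo_subset_Icc_self hx₁)
    fun x hx hne => sub_mul_abs_mul_one_sub_lt ha hx.2 hne
  refine hlim.congr fun n => ?_
  rw [hX n]
  congr 1 <;> refine setIntegral_congr_fun measurableSet_Ioo fun x hx => ?_ <;>
    simp only [sub_rpow_mul_abs_rpow_mul_one_sub_rpow_add_natCast hx]

/-- **Asymptotics of the first-moment ratio** `X_n` of the weight
`(x-a)^{α+n}|x|^{β+n}(1-x)^{γ+n}` on `[a,0]`: `X_n → x₁` as `n → ∞`, where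
`x₁ = ((a+1) - √(a²-a+1))/3` is the unique zero in `[a,0]` of the derivative of
`g(x) = (x-a)x(1-x)`. -/
theorem stmt_17 (a : ℝ) (ha : a < 0) (α β γ : ℝ)
    (hα : -1 < α) (hβ : -1 < β) (hγ : -1 < γ)
    (X : ℕ → ℝ)
    (hX : ∀ n : ℕ, X n =
      (∫ x in Set.Ioo a 0, x * ((x - a) ^ (α + n) * |x| ^ (β + n) * (1 - x) ^ (γ + n))) /
      (∫ x in Set.Ioo a 0, (x - a) ^ (α + n) * |x| ^ (β + n) * (1 - x) ^ (γ + n))) :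
    (((a + 1) - Real.sqrt (a ^ 2 - a + 1)) / 3 ∈ Set.Icc a 0) ∧
    (deriv (fun x : ℝ => (x - a) * x * (1 - x))
        (((a + 1) - Real.sqrt (a ^ 2 - a + 1)) / 3) = 0) ∧
    Filter.Tendsto X Filter.atTop
      (nhds (((a + 1) - Real.sqrt (a ^ 2 - a + 1)) / 3)) :=
  stmt_17_general a ha α β γ hα hβ X hX
end
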